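/- arXiv:2602.11426 — 5 statements merged into one kernel-verified Lean document; each statement's English description precedes it below -/
import Mathlib

section
/- Let (X,T) be a minimal topological dynamical system, let U_1, U_2, … be nonempty open subsets of X, let x ∈ X be a distal point, and let H_1, H_2, … ⊆ ℕ be thick sets. Then the set A := ⋃_i (R(x,U_i) ∩ H_i) is dynamically thick if and only if ⋃_{i=1}^{∞} U_i is dense in X. -/
open Filter Set Topology

attribute [local instance] Ultrafilter.add Ultrafilter.addSemigroup

noncomputable section

namespace DTProof

variable {Z : Type} [MetricSpace Z] [CompactSpace Z]

/-- Action of an ultrafilter on a point via iterates of `f`. -/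
def act (f : Z → Z) (p : Ultrafilter ℕ) (z : Z) : Z :=
  Ultrafilter.extend (fun n => f^[n] z) p

lemma tendsto_act (f : Z → Z) (p : Ultrafilter ℕ) (z : Z) :
    Tendsto (fun n => f^[n] z) (p : Filter ℕ) (𝓝 (act f p z)) := by
  have h : Ultrafilter.extend (fun n => f^[n] z) p = act f p z := rfl
  have h2 := ultrafilter_extend_eq_iff.mp h
  rwa [Ultrafilter.coe_map] at h2

lemma act_eq {f : Z → Z} {p : Ultrafilter ℕ} {z c : Z}
    (h : Tendsto (fun n => f^[n] z) (p : Filter ℕ) (𝓝 c)) : act f p z = c := by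
  apply ultrafilter_extend_eq_iff.mpr
  rwa [Ultrafilter.coe_map]

lemma continuous_act (f : Z → Z) (z : Z) : Continuous (fun p => act f p z) :=
  continuous_ultrafilter_extend _

lemma act_pure (f : Z → Z) (n : ℕ) (z : Z) : act f (pure n) z = f^[n] z :=
  congrFun (ultrafilter_extend_extends fun n => f^[n] z) n

lemma act_add {f : Z → Z} (hf : Continuous f) (p q : Ultrafilter ℕ) (z : Z) :
    act f (p + q) z = act f p (act f q z) := by
  apply act_eq
  rw [Filter.tendsto_def]
  intro s hs
  rcases mem_nhds_iff.mp hs with ⟨O, hOs, hO, hmem⟩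
  have h1 : ∀ᶠ m in (p : Filter ℕ), f^[m] (act f q z) ∈ O :=
    (tendsto_act f p (act f q z)).eventually_mem (hO.mem_nhds hmem)
  have key : ∀ᶠ m in ((p + q : Ultrafilter ℕ) : Filter ℕ), f^[m] z ∈ s := by
    rw [Ultrafilter.eventually_add]
    refine h1.mono fun m hm => ?_
    have h2 : Tendsto (fun n => f^[m + n] z) (q : Filter ℕ) (𝓝 (f^[m] (act f q z))) := by
      have h3 := ((hf.iterate m).tendsto (act f q z)).comp (tendsto_act f q z)
      simpa [Function.comp_def, Function.iterate_add_apply] using h3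
    exact (h2.eventually_mem (hO.mem_nhds hm)).mono fun n hn => hOs hn
  exact key

/-- Minimality of a map. -/
def IsMin (f : Z → Z) : Prop := ∀ z : Z, Dense {w : Z | ∃ n : ℕ, 0 < n ∧ f^[n] z = w}

lemma eq_univ_of_closed_invariant {f : Z → Z} (hmin : IsMin f) {F : Set Z}
    (hne : F.Nonempty) (hcl : IsClosed F) (hinv : ∀ w ∈ F, f w ∈ F) : F = univ := by
  obtain ⟨z, hz⟩ := hne
  have horb : ∀ n : ℕ, f^[n] z ∈ F := by
    intro n; induction n with
    | zero => simpa using hz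
    | succ n ih => rw [Function.iterate_succ_apply']; exact hinv _ ih
  have hsub : {w : Z | ∃ n : ℕ, 0 < n ∧ f^[n] z = w} ⊆ F := by
    rintro w ⟨n, -, rfl⟩; exact horb n
  have hd : Dense F := Dense.mono hsub (hmin z)
  rw [← hcl.closure_eq, hd.closure_eq]

lemma surj_of_min [Nonempty Z] {f : Z → Z} (hmin : IsMin f) (hf : Continuous f) :
    Function.Surjective f := by
  have h : range f = univ := by
    apply eq_univ_of_closed_invariant hmin (range_nonempty f) (isCompact_range hf).isClosed
    rintro w ⟨a, rfl⟩; exact ⟨f a, rfl⟩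
  intro b
  exact (h ▸ mem_univ b : b ∈ range f)

lemma eq_univ_of_image_eq_univ [Nonempty Z] {f : Z → Z} (hmin : IsMin f) (hf : Continuous f)
    {F : Set Z} (hcl : IsClosed F) (him : f '' F = univ) : F = univ := by
  set g : ℕ → Set Z := fun n => Nat.rec F (fun _ s => F ∩ f ⁻¹' s) n with hg
  have gsucc : ∀ n, g (n + 1) = F ∩ f ⁻¹' (g n) := fun n => rfl
  have gF : ∀ n, g n ⊆ F := by
    intro n; cases n with
    | zero => exact fun a ha => ha
    | succ n => rw [gsucc]; exact inter_subset_left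
  have gcl : ∀ n, IsClosed (g n) := by
    intro n; induction n with
    | zero => exact hcl
    | succ n ih => rw [gsucc]; exact hcl.inter (ih.preimage hf)
  have gne : ∀ n, (g n).Nonempty := by
    intro n; induction n with
    | zero =>
      obtain ⟨b, -⟩ := (univ_nonempty : (univ : Set Z).Nonempty)
      obtain ⟨a, ha, -⟩ := (him ▸ mem_univ b : b ∈ f '' F)
      exact ⟨a, ha⟩
    | succ n ih =>
      obtain ⟨b, hb⟩ := ih
      obtain ⟨a, haF, hab⟩ := (him ▸ mem_univ b : b ∈ f '' F)
      refine ⟨a, ?_⟩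
      rw [gsucc]
      exact ⟨haF, by rw [mem_preimage, hab]; exact hb⟩
  have gmono : ∀ n, g (n + 1) ⊆ g n := by
    intro n; induction n with
    | zero =>
      show F ∩ f ⁻¹' (g 0) ⊆ g 0
      exact inter_subset_left
    | succ n ih =>
      show F ∩ f ⁻¹' (g (n + 1)) ⊆ F ∩ f ⁻¹' (g n)
      exact inter_subset_inter (fun a ha => ha) (preimage_mono ih)
  have hGne : (⋂ n, g n).Nonempty :=
    IsCompact.nonempty_iInter_of_sequence_nonempty_isCompact_isClosed g gmono gne
      (gcl 0).isCompact gcl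
  have hGinv : ∀ w ∈ ⋂ n, g n, f w ∈ ⋂ n, g n := by
    intro w hw
    rw [mem_iInter] at hw ⊢
    intro n
    have h1 := hw (n + 1)
    rw [gsucc] at h1
    exact h1.2
  have hGuniv : (⋂ n, g n) = univ :=
    eq_univ_of_closed_invariant hmin hGne (isClosed_iInter gcl) hGinv
  apply eq_univ_of_univ_subset
  calc (univ : Set Z) = ⋂ n, g n := hGuniv.symm
  _ ⊆ g 0 := iInter_subset g 0

lemma exists_open_subset_image [Nonempty Z] {f : Z → Z} (hmin : IsMin f) (hf : Continuous f)
    {O : Set Z} (hO : IsOpen O) (hOne : O.Nonempty) :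
    ∃ G : Set Z, IsOpen G ∧ G.Nonempty ∧ G ⊆ f '' O := by
  have hFcl : IsClosed Oᶜ := hO.isClosed_compl
  have hne : f '' Oᶜ ≠ univ := by
    intro h
    have h2 := eq_univ_of_image_eq_univ hmin hf hFcl h
    obtain ⟨a, ha⟩ := hOne
    exact (h2 ▸ mem_univ a : a ∈ Oᶜ) ha
  refine ⟨(f '' Oᶜ)ᶜ, ((hFcl.isCompact.image hf).isClosed).isOpen_compl,
    nonempty_compl.mpr hne, ?_⟩
  intro c hc
  obtain ⟨a, rfl⟩ := surj_of_min hmin hf c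
  by_cases haO : a ∈ O
  · exact ⟨a, haO, rfl⟩
  · exact absurd (⟨a, haO, rfl⟩ : f a ∈ f '' Oᶜ) hc

lemma exists_open_subset_iterate_image [Nonempty Z] {f : Z → Z} (hmin : IsMin f)
    (hf : Continuous f) (n : ℕ) {O : Set Z} (hO : IsOpen O) (hOne : O.Nonempty) :
    ∃ G : Set Z, IsOpen G ∧ G.Nonempty ∧ G ⊆ f^[n] '' O := by
  induction n with
  | zero => exact ⟨O, hO, hOne, by simp⟩
  | succ n ih =>
    obtain ⟨G, hG, hGne, hGsub⟩ := ih
    obtain ⟨G', h1, h2, h3⟩ := exists_open_subset_image hmin hf hG hGne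
    refine ⟨G', h1, h2, ?_⟩
    intro c hc
    obtain ⟨a, haG, rfl⟩ := h3 hc
    obtain ⟨b, hbO, rfl⟩ := hGsub haG
    exact ⟨b, hbO, Function.iterate_succ_apply' f n b⟩

end DTProof

end

/-- `S ⊆ ℕ` is thick if every finite subset of `ℕ` has a translate inside `S`. -/
def Thick (S : Set ℕ) : Prop :=
  ∀ F : Finset ℕ, ∃ n : ℕ, 0 < n ∧ ∀ f ∈ F, f + n ∈ S

/-- A topological dynamical system: a nonempty compact metric space together with a
continuous self-map. -/
structure MetricDynSystem where
  carrier : Type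
  [metric : MetricSpace carrier]
  [cpt : CompactSpace carrier]
  [carrier_nonempty : Nonempty carrier]
  map : carrier → carrier
  continuous_map : Continuous map

attribute [instance] MetricDynSystem.metric MetricDynSystem.cpt MetricDynSystem.carrier_nonempty

/-- A system is minimal if every point has dense forward orbit `{T^n x : n ∈ ℕ}`. -/
def MetricDynSystem.Minimal (S : MetricDynSystem) : Prop :=
  ∀ x : S.carrier, Dense {y : S.carrier | ∃ n : ℕ, 0 < n ∧ S.map^[n] x = y}

/-- `R(x, U)`: the set of (positive) times at which `x` visits `U`. -/
def RetTimes (S : MetricDynSystem) (x : S.carrier) (U : Set S.carrier) : Set ℕ :=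
  {n : ℕ | 0 < n ∧ S.map^[n] x ∈ U}

/-- `A` is dynamically thick: for every minimal system, every point `x` and every
nonempty open `U`, some `n ∈ A` has `T^n x ∈ U`. -/
def DynThick (A : Set ℕ) : Prop :=
  ∀ S : MetricDynSystem, S.Minimal →
    ∀ (x : S.carrier) (U : Set S.carrier), IsOpen U → U.Nonempty →
      ∃ n ∈ A, 0 < n ∧ S.map^[n] x ∈ U

theorem dynThick_iff_dense_union_of_distal_returns
    (S : MetricDynSystem) (hS : S.Minimal) (x : S.carrier)
    (hx : ∀ y : S.carrier,
      (∀ ε : ℝ, 0 < ε → ∃ n : ℕ, 0 < n ∧ dist (S.map^[n] x) (S.map^[n] y) < ε) → y = x)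
    (U : ℕ → Set S.carrier) (hUopen : ∀ i, IsOpen (U i)) (hUne : ∀ i, (U i).Nonempty)
    (H : ℕ → Set ℕ) (hH : ∀ i, Thick (H i)) :
    DynThick (⋃ i : ℕ, RetTimes S x (U i) ∩ H i) ↔ Dense (⋃ i : ℕ, U i) := by
  constructor
  · -- easy direction
    intro hA
    rw [dense_iff_inter_open]
    intro V hV hVne
    obtain ⟨n, hnA, hn, hnV⟩ := hA S hS x V hV hVne
    obtain ⟨i, hret, -⟩ := mem_iUnion.mp hnA
    exact ⟨S.map^[n] x, hnV, mem_iUnion.mpr ⟨i, hret.2⟩⟩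
  · -- hard direction
    intro hDense Sy hSy y V hVopen hVne
    classical
    haveI : Nonempty S.carrier := S.carrier_nonempty
    -- the product system
    set σ : S.carrier × Sy.carrier → S.carrier × Sy.carrier := Prod.map S.map Sy.map with hσdef
    have hσ : Continuous σ := S.continuous_map.prodMap Sy.continuous_map
    have hσit : ∀ (n : ℕ) (a : S.carrier) (b : Sy.carrier),
        σ^[n] (a, b) = (S.map^[n] a, Sy.map^[n] b) := by
      intro n a b
      rw [hσdef, Prod.map_iterate]
      rfl
    -- ultrafilters concentrated on positive integers
    set P : Set (Ultrafilter ℕ) := {p | {n : ℕ | 0 < n} ∈ p} with hPdef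
    have hPos : ∀ p ∈ P, ∀ᶠ n in (p : Filter ℕ), 0 < n := fun p hp => hp
    have hPadd : ∀ p ∈ P, ∀ q ∈ P, p + q ∈ P := by
      intro p hp q hq
      have hev : ∀ᶠ m in (p : Filter ℕ), ∀ᶠ n in (q : Filter ℕ), 0 < m + n :=
        (hPos p hp).mono fun m hm => Eventually.of_forall fun n =>
          Nat.lt_of_lt_of_le hm (Nat.le_add_right m n)
      exact (Ultrafilter.eventually_add p q _).mpr hev
    have hPcl : IsClosed P := ultrafilter_isClosed_basic _
    have hpure1 : (pure 1 : Ultrafilter ℕ) ∈ P := by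
      show {n : ℕ | 0 < n} ∈ (pure 1 : Ultrafilter ℕ)
      simp
    have hPne : P.Nonempty := ⟨pure 1, hpure1⟩
    -- Zorn: a minimal closed left ideal inside P
    set 𝓛 : Set (Set (Ultrafilter ℕ)) :=
      {L | L.Nonempty ∧ IsClosed L ∧ L ⊆ P ∧ ∀ p ∈ P, ∀ q ∈ L, p + q ∈ L} with h𝓛def
    have hPmem : P ∈ 𝓛 := ⟨hPne, hPcl, fun a ha => ha, hPadd⟩
    obtain ⟨L, -, hLmin⟩ : ∃ L, L ⊆ P ∧ Minimal (· ∈ 𝓛) L := by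
      apply zorn_superset_nonempty 𝓛 ?_ P hPmem
      intro c hc hchain hcne
      refine ⟨⋂₀ c, ⟨?_, ?_, ?_, ?_⟩, fun s hs => sInter_subset_of_mem hs⟩
      · rw [sInter_eq_iInter]
        haveI : Nonempty c := hcne.to_subtype
        apply IsCompact.nonempty_iInter_of_directed_nonempty_isCompact_isClosed
        · intro s t
          rcases hchain.total s.2 t.2 with h | h
          · exact ⟨s, Subset.rfl, h⟩
          · exact ⟨t, h, Subset.rfl⟩
        · exact fun s => (hc s.2).1
        · exact fun s => ((hc s.2).2.1).isCompact
        · exact fun s => (hc s.2).2.1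
      · exact isClosed_sInter fun s hs => (hc hs).2.1
      · obtain ⟨s, hs⟩ := hcne
        exact (sInter_subset_of_mem hs).trans (hc hs).2.2.1
      · intro p hp q hq
        rw [mem_sInter] at hq ⊢
        exact fun s hs => (hc hs).2.2.2 p hp q (hq s hs)
    obtain ⟨hLne, hLcl, hLP, hLideal⟩ := hLmin.1
    -- L = P + q for every q in L
    have hLq : ∀ q ∈ L, (fun p => p + q) '' P = L := by
      intro q hq
      have hsub : (fun p => p + q) '' P ⊆ L := by
        rintro _ ⟨p, hp, rfl⟩
        exact hLideal p hp q hq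
      have hmem' : (fun p => p + q) '' P ∈ 𝓛 := by
        refine ⟨hPne.image _, ?_, ?_, ?_⟩
        · exact ((hPcl.isCompact).image (Ultrafilter.continuous_add_left q)).isClosed
        · rintro _ ⟨p, hp, rfl⟩
          exact hPadd p hp q (hLP hq)
        · rintro s hs _ ⟨p, hp, rfl⟩
          exact ⟨s + p, hPadd s hs p hp, by exact add_assoc s p q⟩
      exact subset_antisymm hsub (hLmin.2 hmem' hsub)
    -- there is q ∈ L fixing y
    have horbY : (fun p => DTProof.act Sy.map p y) '' L = univ := by
      apply DTProof.eq_univ_of_closed_invariant hSy (hLne.image _)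
        ((hLcl.isCompact.image (DTProof.continuous_act Sy.map y)).isClosed)
      rintro _ ⟨p, hp, rfl⟩
      refine ⟨pure 1 + p, hLideal _ hpure1 _ hp, ?_⟩
      show DTProof.act Sy.map (pure 1 + p) y = Sy.map (DTProof.act Sy.map p y)
      rw [DTProof.act_add Sy.continuous_map, DTProof.act_pure]
      simp
    obtain ⟨p₀, hp₀L, hp₀y⟩ :
        ∃ p ∈ L, DTProof.act Sy.map p y = y := by
      have hy' : y ∈ (fun p => DTProof.act Sy.map p y) '' L := by
        rw [horbY]; exact mem_univ y
      obtain ⟨p, hp, hpy⟩ := hy'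
      exact ⟨p, hp, hpy⟩
    -- idempotent fixing y
    set J : Set (Ultrafilter ℕ) :=
      L ∩ ((fun p => DTProof.act Sy.map p y) ⁻¹' {y}) with hJdef
    have hJne : J.Nonempty := ⟨p₀, hp₀L, hp₀y⟩
    have hJcl : IsClosed J :=
      hLcl.inter (isClosed_singleton.preimage (DTProof.continuous_act Sy.map y))
    have hJadd : ∀ a ∈ J, ∀ b ∈ J, a + b ∈ J := by
      rintro a ⟨haL, hay⟩ b ⟨hbL, hby⟩
      refine ⟨hLideal a (hLP haL) b hbL, ?_⟩
      show DTProof.act Sy.map (a + b) y = y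
      rw [DTProof.act_add Sy.continuous_map]
      rw [show DTProof.act Sy.map b y = y from hby, show DTProof.act Sy.map a y = y from hay]
    obtain ⟨u, huJ, huu⟩ := exists_idempotent_in_compact_add_subsemigroup
      (fun r => Ultrafilter.continuous_add_left r) J hJne hJcl.isCompact hJadd
    have huL : u ∈ L := huJ.1
    have huy : DTProof.act Sy.map u y = y := huJ.2
    have huPos : ∀ᶠ n in (u : Filter ℕ), 0 < n := hPos u (hLP huL)
    -- distality: u fixes x
    have hux : DTProof.act S.map u x = x := by
      set x' := DTProof.act S.map u x with hx'def
      have hfix : DTProof.act S.map u x' = x' := by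
        rw [hx'def, ← DTProof.act_add S.continuous_map, huu]
      apply hx x'
      intro ε hε
      have h1 : ∀ᶠ n in (u : Filter ℕ), S.map^[n] x ∈ Metric.ball x' (ε / 2) :=
        (DTProof.tendsto_act S.map u x).eventually_mem (Metric.ball_mem_nhds _ (half_pos hε))
      have h2 : ∀ᶠ n in (u : Filter ℕ), S.map^[n] x' ∈ Metric.ball x' (ε / 2) := by
        have h2' := (DTProof.tendsto_act S.map u x').eventually_mem
          (Metric.ball_mem_nhds (DTProof.act S.map u x') (half_pos hε))
        rwa [hfix] at h2'
      obtain ⟨n, hn1, hn2, hn3⟩ := (h1.and (h2.and huPos)).exists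
      refine ⟨n, hn3, ?_⟩
      have d1 : dist (S.map^[n] x) x' < ε / 2 := Metric.mem_ball.mp hn1
      have d2 : dist (S.map^[n] x') x' < ε / 2 := Metric.mem_ball.mp hn2
      calc dist (S.map^[n] x) (S.map^[n] x')
          ≤ dist (S.map^[n] x) x' + dist (S.map^[n] x') x' := dist_triangle_right _ _ _
        _ < ε := by linarith
    -- the point z = (x, y) and the minimal set M
    have hactprod : ∀ (p : Ultrafilter ℕ) (a : S.carrier) (b : Sy.carrier),
        DTProof.act σ p (a, b) = (DTProof.act S.map p a, DTProof.act Sy.map p b) := by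
      intro p a b
      apply DTProof.act_eq
      have h1 := (DTProof.tendsto_act S.map p a).prodMk_nhds (DTProof.tendsto_act Sy.map p b)
      simpa [hσit] using h1
    have huz : DTProof.act σ u (x, y) = (x, y) := by
      rw [hactprod, hux, huy]
    set M : Set (S.carrier × Sy.carrier) := (fun p => DTProof.act σ p (x, y)) '' L with hMdef
    have hzM : (x, y) ∈ M := ⟨u, huL, huz⟩
    have hMcpt : IsCompact M := hLcl.isCompact.image (DTProof.continuous_act σ (x, y))
    have hMinv : ∀ m ∈ M, σ m ∈ M := by
      rintro _ ⟨p, hp, rfl⟩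
      refine ⟨pure 1 + p, hLideal _ hpure1 _ hp, ?_⟩
      show DTProof.act σ (pure 1 + p) (x, y) = σ (DTProof.act σ p (x, y))
      rw [DTProof.act_add hσ, DTProof.act_pure]
      simp
    have hMit : ∀ (n : ℕ), ∀ m ∈ M, σ^[n] m ∈ M := by
      intro n
      induction n with
      | zero => intro m hm; simpa using hm
      | succ n ih =>
        intro m hm
        rw [Function.iterate_succ_apply']
        exact hMinv _ (ih m hm)
    -- minimality of M: positive-time returns into any open set around a point of M
    have hmin : ∀ m ∈ M, ∀ m' ∈ M, ∀ W : Set (S.carrier × Sy.carrier), IsOpen W → m' ∈ W →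
        ∃ n : ℕ, 0 < n ∧ σ^[n] m ∈ W := by
      rintro _ ⟨q, hqL, rfl⟩ _ ⟨r, hrL, rfl⟩ W hWo hWm
      obtain ⟨s, hsP, rfl⟩ : r ∈ (fun p => p + q) '' P := (hLq q hqL).symm ▸ hrL
      have heq : DTProof.act σ (s + q) (x, y)
          = DTProof.act σ s (DTProof.act σ q (x, y)) := DTProof.act_add hσ _ _ _
      have hWm' : DTProof.act σ s (DTProof.act σ q (x, y)) ∈ W := by
        rw [← heq]; exact hWm
      have h1 : ∀ᶠ n in (s : Filter ℕ), σ^[n] (DTProof.act σ q (x, y)) ∈ W :=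
        (DTProof.tendsto_act σ s (DTProof.act σ q (x, y))).eventually_mem (hWo.mem_nhds hWm')
      obtain ⟨n, hn1, hn2⟩ := (h1.and (hPos s hsP)).exists
      exact ⟨n, hn2, hn1⟩
    -- both projections of M are everything
    have hfullX : ∀ w : S.carrier, ∃ v, (w, v) ∈ M := by
      have him : Prod.fst '' M = univ := by
        have hne1 : (Prod.fst '' M).Nonempty := ⟨x, (x, y), hzM, rfl⟩
        apply DTProof.eq_univ_of_closed_invariant hS hne1
          ((hMcpt.image continuous_fst).isClosed)
        rintro _ ⟨m, hm, rfl⟩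
        exact ⟨σ m, hMinv m hm, rfl⟩
      intro w
      have hw' : w ∈ Prod.fst '' M := by rw [him]; exact mem_univ w
      obtain ⟨m, hm, hm1⟩ := hw'
      refine ⟨m.2, ?_⟩
      have hmm : (m.1, m.2) ∈ M := by rw [Prod.mk.eta]; exact hm
      rwa [hm1] at hmm
    have hfullY : ∀ v : Sy.carrier, ∃ w, (w, v) ∈ M := by
      have him : Prod.snd '' M = univ := by
        have hne2 : (Prod.snd '' M).Nonempty := ⟨y, (x, y), hzM, rfl⟩
        apply DTProof.eq_univ_of_closed_invariant hSy hne2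
          ((hMcpt.image continuous_snd).isClosed)
        rintro _ ⟨m, hm, rfl⟩
        exact ⟨σ m, hMinv m hm, rfl⟩
      intro v
      have hv' : v ∈ Prod.snd '' M := by rw [him]; exact mem_univ v
      obtain ⟨m, hm, hm2⟩ := hv'
      refine ⟨m.1, ?_⟩
      have hmm : (m.1, m.2) ∈ M := by rw [Prod.mk.eta]; exact hm
      rwa [hm2] at hmm
    -- pick target ball inside V
    obtain ⟨v₀, hv₀V⟩ := hVne
    obtain ⟨r, hr, hballV⟩ := Metric.isOpen_iff.mp hVopen v₀ hv₀V
    obtain ⟨w₀, hw₀⟩ := hfullY v₀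
    set K : Set S.carrier :=
      Prod.fst '' (M ∩ (univ ×ˢ Metric.closedBall v₀ (r / 2))) with hKdef
    have hKcpt : IsCompact K :=
      (hMcpt.inter_right (isClosed_univ.prod Metric.isClosed_closedBall)).image continuous_fst
    have hcov : ∀ w : S.carrier, ∃ n : ℕ, S.map^[n] w ∈ K := by
      intro w
      obtain ⟨v, hv⟩ := hfullX w
      obtain ⟨n, hn, hmem⟩ := hmin _ hv _ hw₀ (univ ×ˢ Metric.ball v₀ (r / 2))
        (isOpen_univ.prod Metric.isOpen_ball)
        ⟨mem_univ _, Metric.mem_ball_self (by linarith)⟩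
      refine ⟨n, ?_⟩
      have hM' : σ^[n] (w, v) ∈ M := hMit n _ hv
      rw [hσit] at hmem hM'
      exact ⟨(S.map^[n] w, Sy.map^[n] v),
        ⟨hM', mem_univ _, Metric.ball_subset_closedBall hmem.2⟩, rfl⟩
    -- Baire category: some preimage of K has interior
    have hUnion : (⋃ n : ℕ, (S.map^[n]) ⁻¹' K) = univ :=
      eq_univ_of_forall fun w => mem_iUnion.mpr (hcov w)
    obtain ⟨n₀, hn₀⟩ := nonempty_interior_of_iUnion_of_closed
      (fun n : ℕ => hKcpt.isClosed.preimage (S.continuous_map.iterate n)) hUnion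
    -- images of open sets are somewhere dense: find a point of K in the dense union
    obtain ⟨G, hGo, hGne, hGsub⟩ := DTProof.exists_open_subset_iterate_image hS
      S.continuous_map n₀ isOpen_interior hn₀
    have hGK : G ⊆ K := by
      intro gpt hg
      obtain ⟨a, ha, rfl⟩ := hGsub hg
      exact mem_preimage.mp (interior_subset ha)
    obtain ⟨w₁, hw₁G, hw₁D⟩ := hDense.inter_open_nonempty G hGo hGne
    obtain ⟨i₁, hw₁U⟩ := mem_iUnion.mp hw₁D
    obtain ⟨m₁, hm₁M, hm₁1⟩ := hGK hw₁G
    have hv₁V : m₁.2 ∈ V := by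
      apply hballV
      have hd : dist m₁.2 v₀ ≤ r / 2 := hm₁M.2.2
      exact Metric.mem_ball.mpr (lt_of_le_of_lt hd (by linarith))
    set W : Set (S.carrier × Sy.carrier) := (U i₁) ×ˢ V with hWdef
    have hWo : IsOpen W := (hUopen i₁).prod hVopen
    have hm₁W : m₁ ∈ W := ⟨by rw [hm₁1]; exact hw₁U, hv₁V⟩
    -- finite subcover for syndeticity
    have hcover : M ⊆ ⋃ i : {k : ℕ // 0 < k}, (σ^[i.1]) ⁻¹' W := by
      intro m hm
      obtain ⟨n, hn, hmem⟩ := hmin m hm m₁ hm₁M.1 W hWo hm₁W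
      exact mem_iUnion.mpr ⟨⟨n, hn⟩, hmem⟩
    obtain ⟨t, ht⟩ := hMcpt.elim_finite_subcover _
      (fun i : {k : ℕ // 0 < k} => hWo.preimage (hσ.iterate i.1)) hcover
    set g : ℕ := t.sup (fun i => i.1) with hgdef
    obtain ⟨N, hN, hNH⟩ := hH i₁ (Finset.range (g + 1))
    have hzN : σ^[N] (x, y) ∈ M := hMit N _ hzM
    obtain ⟨i, hit, hiW⟩ : ∃ i ∈ t, σ^[N] (x, y) ∈ (σ^[i.1]) ⁻¹' W := by
      have h := ht hzN
      simpa using h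
    have hn' : σ^[i.1 + N] (x, y) ∈ W := by
      rw [Function.iterate_add_apply]
      exact hiW
    rw [hσit] at hn'
    have hiH : i.1 + N ∈ H i₁ :=
      hNH i.1 (Finset.mem_range.mpr (Nat.lt_succ_of_le (Finset.le_sup hit)))
    have hipos : 0 < i.1 + N := Nat.add_pos_left i.2 N
    exact ⟨i.1 + N, mem_iUnion.mpr ⟨i₁, ⟨hipos, hn'.1⟩, hiH⟩, hipos, hn'.2⟩
end

section
/- A set A ⊆ ℕ is dynamically thick if and only if there exist a robustly syndetic collection 𝒞 of subsets of ℕ and, for each B ∈ 𝒞, a thick set H_B ⊆ ℕ, such that A = ⋃_{B∈𝒞} (B ∩ H_B). -/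
/-- The set `A - n`, difference taken inside the positive integers:
`A - n = {m : m >= 1 and m + n ∈ A}`. -/
def NSub (A : Set ℕ) (n : ℕ) : Set ℕ := {m : ℕ | 0 < m ∧ m + n ∈ A}

/-- `S ⊆ ℕ` is syndetic if `ℕ = ⋃_{i=1}^{N} (S - i)` for some `N ≥ 1`. -/
def Syndetic (S : Set ℕ) : Prop :=
  ∃ N : ℕ, 0 < N ∧ ∀ m : ℕ, 0 < m → ∃ i : ℕ, 1 ≤ i ∧ i ≤ N ∧ m + i ∈ S

/-- `A` is dynamically syndetic: it contains a set of return times `R(x, U)` for a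
minimal system and a nonempty open `U`. -/
def DynSyndetic (A : Set ℕ) : Prop :=
  ∃ S : MetricDynSystem, S.Minimal ∧
    ∃ (x : S.carrier) (U : Set S.carrier), IsOpen U ∧ U.Nonempty ∧ RetTimes S x U ⊆ A

/-- A collection `C` of subsets of `ℕ` is robustly syndetic if every dynamically
syndetic set has syndetic intersection with some member of `C`. -/
def RobustlySyndetic (C : Set (Set ℕ)) : Prop :=
  ∀ D : Set ℕ, DynSyndetic D → ∃ B ∈ C, Syndetic (D ∩ B)

/-!
If `A` is a union of sets `B ∩ H_B` as in the statement, the return times `R(x, U)` meet some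
`B ∈ 𝒞` syndetically, and a long interval inside the thick set `H_B` catches one of those returns.

Conversely, take `𝒞 = {B | A ∪ Bᶜ thick}` and `H_B = A ∪ Bᶜ`. The heart of the matter is that
`A ∩ R(x, U)` is piecewise syndetic for every minimal system: then `R(x, U)`, cut down to
`A` on the long windows where `A ∩ R(x, U)` has bounded gaps, is a member of `𝒞` that meets
`R(x, U)` syndetically.
-/

theorem syndetic_iff_exists_gap {S : Set ℕ} :
    Syndetic S ↔ ∃ g, ∀ m, ∃ t ∈ S, m < t ∧ t ≤ m + g := by
  constructor
  · rintro ⟨N, -, hN⟩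
    refine ⟨N + 1, fun m => ?_⟩
    obtain ⟨i, hi, hiN, hS⟩ := hN (m + 1) (Nat.succ_pos m)
    exact ⟨m + 1 + i, hS, by omega, by omega⟩
  · rintro ⟨g, hg⟩
    obtain ⟨t, -, ht, htg⟩ := hg 0
    refine ⟨g, by omega, fun m _ => ?_⟩
    obtain ⟨t, hS, hmt, htg⟩ := hg m
    exact ⟨t - m, by omega, by omega, by rwa [Nat.add_sub_cancel' hmt.le]⟩

theorem Syndetic.nonempty {S : Set ℕ} (hS : Syndetic S) : S.Nonempty := by
  obtain ⟨g, hg⟩ := syndetic_iff_exists_gap.1 hS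
  obtain ⟨t, ht, -⟩ := hg 0
  exact ⟨t, ht⟩

theorem Thick.mono {S T : Set ℕ} (hS : Thick S) (h : S ⊆ T) : Thick T := by
  intro F
  obtain ⟨n, hn, hF⟩ := hS F
  exact ⟨n, hn, fun f hf => h (hF f hf)⟩

theorem MetricDynSystem.Minimal.syndetic_retTimes {S : MetricDynSystem} (hS : S.Minimal)
    (x : S.carrier) {U : Set S.carrier} (hU : IsOpen U) (hne : U.Nonempty) :
    Syndetic (RetTimes S x U) := by
  have hcover : (Set.univ : Set S.carrier) ⊆ ⋃ n : ℕ, S.map^[n + 1] ⁻¹' U := by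
    intro y _
    obtain ⟨_, ⟨n, hn, rfl⟩, hyU⟩ := (hS y).exists_mem_open hU hne
    obtain ⟨k, rfl⟩ := Nat.exists_eq_add_of_lt hn
    exact Set.mem_iUnion.2 ⟨k, by simpa using hyU⟩
  obtain ⟨F, hF⟩ := isCompact_univ.elim_finite_subcover _
    (fun n => (S.continuous_map.iterate (n + 1)).isOpen_preimage U hU) hcover
  refine syndetic_iff_exists_gap.2 ⟨F.sup id + 1, fun m => ?_⟩
  obtain ⟨n, hnF, hn⟩ := Set.mem_iUnion₂.1 (hF (Set.mem_univ (S.map^[m] x)))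
  have hnle : n ≤ F.sup id := Finset.le_sup (f := id) hnF
  refine ⟨m + (n + 1), ⟨by omega, ?_⟩, by omega, by omega⟩
  rwa [add_comm, Function.iterate_add_apply]

theorem DynThick.of_robustlySyndetic {A : Set ℕ} {C : Set (Set ℕ)} (hC : RobustlySyndetic C)
    {H : Set ℕ → Set ℕ} (hH : ∀ B ∈ C, Thick (H B)) (hA : A = ⋃ B ∈ C, B ∩ H B) :
    DynThick A := by
  intro S hS x U hU hne
  obtain ⟨B, hBC, N, -, hsyn⟩ := hC _ ⟨S, hS, x, U, hU, hne, subset_rfl⟩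
  obtain ⟨n, hn, hthick⟩ := hH B hBC (Finset.range (N + 1))
  obtain ⟨i, hi, hiN, hR, hB⟩ := hsyn n hn
  have hH : n + i ∈ H B := by
    simpa [add_comm] using hthick i (Finset.mem_range.2 (by omega))
  exact ⟨n + i, hA ▸ Set.mem_biUnion hBC ⟨hB, hH⟩, hR⟩

def PiecewiseSyndetic (S : Set ℕ) : Prop :=
  ∃ N, ∀ k, ∃ t, ∀ s, t ≤ s → s ≤ t + k → ∃ i, 1 ≤ i ∧ i ≤ N ∧ s + i ∈ S

/-- Off the long windows on which `P` has gaps at most `N`, the points of `B` come from `D`; on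
them, from `P`. -/
theorem PiecewiseSyndetic.exists_syndetic_thick_union_compl {P D : Set ℕ}
    (hP : PiecewiseSyndetic P) (hD : Syndetic D) (hPD : P ⊆ D) :
    ∃ B ⊆ D, Syndetic B ∧ Thick (P ∪ Bᶜ) := by
  obtain ⟨N, hN⟩ := hP
  choose t ht using hN
  set W : Set ℕ := {n | ∃ k, t k < n ∧ n ≤ t k + k}
  refine ⟨D \ W ∪ P, Set.union_subset Set.sdiff_subset hPD, ?_, ?_⟩
  · obtain ⟨g, hg⟩ := syndetic_iff_exists_gap.1 hD
    refine syndetic_iff_exists_gap.2 ⟨g + N, fun m => ?_⟩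
    obtain ⟨d, hdD, hmd, hdg⟩ := hg m
    by_cases hdW : d ∈ W
    · obtain ⟨k, hk, hkd⟩ := hdW
      obtain ⟨i, hi, hiN, hiP⟩ := ht k (max m (t k)) (le_max_right _ _) (by omega)
      exact ⟨_, Or.inr hiP, by omega, by omega⟩
    · exact ⟨d, Or.inl ⟨hdD, hdW⟩, hmd, by omega⟩
  · intro F
    refine ⟨t (F.sup id + 1) + 1, by omega, fun f hf => ?_⟩
    have hfF : f ≤ F.sup id := Finset.le_sup (f := id) hf
    have hfW : f + (t (F.sup id + 1) + 1) ∈ W := ⟨F.sup id + 1, by omega, by omega⟩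
    by_cases hfP : f + (t (F.sup id + 1) + 1) ∈ P
    · exact Or.inl hfP
    · exact Or.inr fun hB => hB.elim (fun h => h.2 hfW) hfP

section UniformRecurrence

variable {X : Type} [MetricSpace X]

def IsUniformlyRecurrent (T : X → X) (z : X) : Prop :=
  ∀ ε > 0, ∃ N, ∀ m, ∃ n, m < n ∧ n ≤ m + N ∧ dist (T^[n] z) z < ε

theorem IsUniformlyRecurrent.exists_iterate_dist_lt {T : X → X} {z : X}
    (hz : IsUniformlyRecurrent T z) (hT : Continuous T) {q : X}
    (hq : q ∈ closure (Set.range fun n => T^[n] z)) {ε : ℝ} (hε : 0 < ε) :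
    ∃ j, 0 < j ∧ dist (T^[j] q) z < ε := by
  obtain ⟨N, hN⟩ := hz (ε / 2) (half_pos hε)
  have hnear : ∀ᶠ y in nhds q, ∀ j ∈ Set.Iic N, dist (T^[j] y) (T^[j] q) < ε / 2 :=
    (Filter.eventually_all_finite (Set.finite_Iic N)).2 fun j _ =>
      (hT.iterate j).continuousAt.eventually (Metric.ball_mem_nhds _ (half_pos hε))
  obtain ⟨_, hy, n₀, rfl⟩ := mem_closure_iff_nhds.1 hq _ hnear
  obtain ⟨n, hn₀n, hnN, hn⟩ := hN n₀
  have hiter : T^[n - n₀] (T^[n₀] z) = T^[n] z := by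
    rw [← Function.iterate_add_apply, Nat.sub_add_cancel hn₀n.le]
  refine ⟨n - n₀, by omega, ?_⟩
  calc dist (T^[n - n₀] q) z ≤ dist (T^[n - n₀] q) (T^[n] z) + dist (T^[n] z) z :=
        dist_triangle _ _ _
    _ < ε / 2 + ε / 2 := by
        refine add_lt_add ?_ hn
        rw [dist_comm, ← hiter]
        exact hy (n - n₀) (by simp only [Set.mem_Iic]; omega)
    _ = ε := add_halves ε

variable [CompactSpace X]

abbrev orbitClosureSystem (T : X → X) (hT : Continuous T) (z : X) : MetricDynSystem where
  carrier := closure (Set.range fun n => T^[n] z)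
  cpt := isCompact_iff_compactSpace.mp isClosed_closure.isCompact
  carrier_nonempty := ⟨⟨z, subset_closure ⟨0, rfl⟩⟩⟩
  map := (Set.MapsTo.closure (t := Set.range fun n => T^[n] z)
    (Set.mapsTo_range_iff.2 fun n => ⟨n + 1, Function.iterate_succ_apply' T n z⟩) hT).restrict _ _ _
  continuous_map := hT.restrict _

theorem orbitClosureSystem_coe_iterate (T : X → X) (hT : Continuous T) (z : X) (n : ℕ)
    (q : (orbitClosureSystem T hT z).carrier) :
    ((orbitClosureSystem T hT z).map^[n] q).1 = T^[n] q.1 := by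
  simp only [orbitClosureSystem, Set.MapsTo.iterate_restrict, Set.MapsTo.val_restrict_apply]

theorem IsUniformlyRecurrent.minimal_orbitClosureSystem {T : X → X} {z : X}
    (hz : IsUniformlyRecurrent T z) (hT : Continuous T) :
    (orbitClosureSystem T hT z).Minimal := by
  intro q
  refine Metric.dense_iff.2 fun w ε hε => ?_
  obtain ⟨_, ⟨m, rfl⟩, hwm⟩ := Metric.mem_closure_iff.1 w.2 (ε / 2) (half_pos hε)
  obtain ⟨ρ, hρ, hcont⟩ :=
    Metric.continuousAt_iff.1 (hT.iterate m).continuousAt (ε / 2) (half_pos hε)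
  obtain ⟨j, hj, hqj⟩ := hz.exists_iterate_dist_lt hT q.2 hρ
  refine ⟨_, ?_, m + j, by omega, rfl⟩
  rw [Metric.mem_ball, Subtype.dist_eq, orbitClosureSystem_coe_iterate,
    Function.iterate_add_apply]
  calc dist (T^[m] (T^[j] q)) w ≤ dist (T^[m] (T^[j] q)) (T^[m] z) + dist (T^[m] z) w :=
        dist_triangle _ _ _
    _ < ε / 2 + ε / 2 := add_lt_add (hcont hqj) (by rwa [dist_comm])
    _ = ε := add_halves ε

theorem DynThick.exists_mem_iterate_mem {A : Set ℕ} (hA : DynThick A) {T : X → X}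
    (hT : Continuous T) {z : X} (hz : IsUniformlyRecurrent T z) {V : Set X} (hV : IsOpen V)
    (hzV : ∃ n, T^[n] z ∈ V) : ∃ n ∈ A, 0 < n ∧ T^[n] z ∈ V := by
  obtain ⟨n₀, hn₀⟩ := hzV
  obtain ⟨n, hnA, hn, hnV⟩ := hA (orbitClosureSystem T hT z) (hz.minimal_orbitClosureSystem hT)
    ⟨z, subset_closure ⟨0, rfl⟩⟩ (Subtype.val ⁻¹' V) (hV.preimage continuous_subtype_val)
    ⟨⟨_, subset_closure ⟨n₀, rfl⟩⟩, hn₀⟩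
  refine ⟨n, hnA, hn, ?_⟩
  rwa [Set.mem_preimage, orbitClosureSystem_coe_iterate] at hnV

end UniformRecurrence

def UniformlyRecurrentSet (Λ : Set ℕ) : Prop :=
  ∀ k, ∃ D, ∀ m, ∃ u, m < u ∧ u ≤ m + D ∧ ∀ i < k, (u + i ∈ Λ ↔ i ∈ Λ)

/-- The indicator of `Λ` is a uniformly recurrent point of the shift on `ℕ → Bool`, and `Λ` is
the set of times at which it visits the cylinder `{ξ | ξ 0 = true}`. -/
theorem DynThick.exists_mem_of_uniformlyRecurrentSet {A Λ : Set ℕ} (hA : DynThick A)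
    (hΛ : UniformlyRecurrentSet Λ) (hne : Λ.Nonempty) : ∃ n ∈ A, 0 < n ∧ n ∈ Λ := by
  classical
  let _ : MetricSpace (ℕ → Bool) := PiNat.metricSpaceOfDiscreteUniformity fun _ => rfl
  set shift : (ℕ → Bool) → (ℕ → Bool) := fun ξ i => ξ (i + 1)
  have hshift : ∀ n ξ i, shift^[n] ξ i = ξ (i + n) := by
    intro n
    induction n with
    | zero => simp
    | succ n ih =>
      intro ξ i
      rw [Function.iterate_succ_apply']
      exact (ih ξ (i + 1)).trans (by rw [add_right_comm, add_assoc])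
  set η : ℕ → Bool := fun n => decide (n ∈ Λ)
  have hη : ∀ n, shift^[n] η ∈ (fun ξ => ξ 0) ⁻¹' {true} ↔ n ∈ Λ := by simp [hshift, η]
  have hrec : IsUniformlyRecurrent shift η := by
    intro ε hε
    obtain ⟨k, hk⟩ := exists_pow_lt_of_lt_one hε (by norm_num : (1 / 2 : ℝ) < 1)
    obtain ⟨D, hD⟩ := hΛ k
    refine ⟨D, fun m => ?_⟩
    obtain ⟨u, hmu, huD, hu⟩ := hD m
    refine ⟨u, hmu, huD, (PiNat.mem_cylinder_iff_dist_le.1 fun i hi => ?_).trans_lt hk⟩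
    simp [hshift, η, add_comm i u, hu i hi]
  obtain ⟨n₀, hn₀⟩ := hne
  obtain ⟨n, hnA, hn, hnΛ⟩ := hA.exists_mem_iterate_mem
    (continuous_pi fun i => continuous_apply (i + 1)) hrec
    ((isOpen_discrete {true}).preimage (continuous_apply 0)) ⟨n₀, (hη n₀).2 hn₀⟩
  exact ⟨n, hnA, hn, (hη n).1 hnΛ⟩

section Copies

variable (L : ℕ → ℕ) (P : Set (ℕ × ℕ))

def window (p : ℕ × ℕ) : Set ℕ := Set.Ico p.2 (p.2 + L p.1)

/-- `Occurrence L P ℓ u`: the block `[u, u + L ℓ)` is a copy of `[0, L ℓ)`. -/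
inductive Occurrence (ℓ : ℕ) : ℕ → Prop
  | base {σ t : ℕ} : (σ, t) ∈ P → ℓ ≤ σ → Occurrence ℓ t
  | nest {σ t u : ℕ} : (σ, t) ∈ P → Occurrence ℓ u → u + L ℓ ≤ L σ → Occurrence ℓ (t + u)

/-- The smallest set containing `a` whose part in `[0, L σ)` is copied into every window
`(σ, t) ∈ P`. -/
inductive CopySet (a : ℕ) : ℕ → Prop
  | base : CopySet a a
  | copy {σ t u : ℕ} : (σ, t) ∈ P → CopySet a u → u < L σ → CopySet a (t + u)

def OccurrencesDense (ℓ D c b : ℕ) : Prop :=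
  ∀ m, c ≤ m → m + D ≤ b → ∃ u, m < u ∧ u ≤ m + D ∧ Occurrence L P ℓ u ∧ u + L ℓ ≤ b

def OccurrenceEndsNear (ℓ R b : ℕ) : Prop :=
  ∃ u, Occurrence L P ℓ u ∧ b ≤ u + L ℓ + R ∧ u + L ℓ ≤ b

variable {L P}

theorem disjoint_window_of_le {p q : ℕ × ℕ} (h : p.2 + L p.1 ≤ q.2) :
    Disjoint (window L p) (window L q) :=
  Set.disjoint_left.2 fun n hp hq => by simp only [window, Set.mem_Ico] at hp hq; omega

theorem CopySet.le {a n : ℕ} (h : CopySet L P a n) : a ≤ n := by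
  induction h <;> omega

theorem CopySet.add_iff {a σ t i : ℕ} (hdisj : P.PairwiseDisjoint (window L))
    (ha : ∀ p ∈ P, a < p.2) (hσt : (σ, t) ∈ P) (hi : i < L σ) :
    CopySet L P a (t + i) ↔ CopySet L P a i := by
  refine ⟨fun h => ?_, fun h => .copy hσt h hi⟩
  generalize hn : t + i = n at h
  cases h with
  | base => exact absurd (ha _ hσt) (by omega)
  | @copy σ' t' u hσt' hu hu' =>
    have hwin : (σ, t) = (σ', t') := hdisj.elim_set hσt hσt' (t + i)
      (by simp only [window, Set.mem_Ico]; omega) (by simp only [window, Set.mem_Ico]; omega)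
    obtain ⟨-, rfl⟩ := Prod.ext_iff.1 hwin
    rwa [show i = u by omega]

theorem Occurrence.copySet_add_iff {a ℓ u : ℕ} (hL : Monotone L)
    (hdisj : P.PairwiseDisjoint (window L)) (ha : ∀ p ∈ P, a < p.2) (h : Occurrence L P ℓ u) :
    ∀ i < L ℓ, (CopySet L P a (u + i) ↔ CopySet L P a i) := by
  induction h with
  | base hσt hℓσ => exact fun i hi => CopySet.add_iff hdisj ha hσt (hi.trans_le (hL hℓσ))
  | nest hσt _ hu ih =>
    intro i hi
    rw [add_assoc]
    exact (CopySet.add_iff hdisj ha hσt (by omega)).trans (ih i hi)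

theorem CopySet.uniformlyRecurrentSet (a : ℕ) (hL : StrictMono L)
    (hdisj : P.PairwiseDisjoint (window L)) (ha : ∀ p ∈ P, a < p.2)
    (hocc : ∀ ℓ, 1 ≤ ℓ → ∃ D, ∀ m, ∃ u, m < u ∧ u ≤ m + D ∧ Occurrence L P ℓ u) :
    UniformlyRecurrentSet {n | CopySet L P a n} := by
  intro k
  obtain ⟨D, hD⟩ := hocc (k + 1) (by omega)
  refine ⟨D, fun m => ?_⟩
  obtain ⟨u, hmu, huD, hu⟩ := hD m
  exact ⟨u, hmu, huD, fun i hi =>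
    hu.copySet_add_iff hL.monotone hdisj ha i (by have : k + 1 ≤ L (k + 1) := hL.le_apply; omega)⟩

/-- The errors `c / 2 ^ (σ + 1)` made when copying into windows of scale `σ` sum up to less
than `c`, because a copy nested in a window of scale `σ` comes from a window of lower scale. -/
theorem CopySet.dist_lt {X : Type*} [PseudoMetricSpace X] {f : ℕ → X} {c : ℝ} (hc : 0 < c)
    (hL : StrictMono L) (hP : ∀ p ∈ P, L p.1 < p.2)
    (hf : ∀ p ∈ P, ∀ i < L p.1, dist (f (p.2 + i)) (f i) ≤ c / 2 ^ (p.1 + 1))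
    {a n : ℕ} (h : CopySet L P a n) : dist (f n) (f a) < c := by
  suffices ∀ τ, n < L τ → dist (f n) (f a) ≤ c - c / 2 ^ τ from
    (this (n + 1) ((Nat.lt_succ_self n).trans_le hL.le_apply)).trans_lt
      (sub_lt_self c (by positivity))
  induction h with
  | base =>
    intro τ _
    rw [dist_self, sub_nonneg]
    exact div_le_self hc.le (one_le_pow₀ one_le_two)
  | @copy σ t u hσt _ hu ih =>
    intro τ hτ
    have hστ : σ + 1 ≤ τ := hL.lt_iff_lt.1 (by have := hP _ hσt; dsimp at this; omega)
    calc dist (f (t + u)) (f a) ≤ dist (f (t + u)) (f u) + dist (f u) (f a) := dist_triangle _ _ _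
      _ ≤ c / 2 ^ (σ + 1) + (c - c / 2 ^ σ) := add_le_add (hf _ hσt u hu) (ih σ hu)
      _ = c - c / 2 ^ (σ + 1) := by rw [pow_succ]; ring
      _ ≤ c - c / 2 ^ τ := by gcongr; norm_num

theorem OccurrencesDense.of_lt {ℓ D c b : ℕ} (h : b < c + D) : OccurrencesDense L P ℓ D c b :=
  fun m hcm hmb => absurd hmb (by omega)

theorem OccurrencesDense.glue_at {ℓ D c b b' : ℕ} (h₁ : OccurrencesDense L P ℓ D c b)
    (hb : Occurrence L P ℓ b) (hbb' : b + L ℓ ≤ b') (h₂ : OccurrencesDense L P ℓ D b b') :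
    OccurrencesDense L P ℓ D c b' := by
  intro m hcm hmb'
  by_cases hmb : m + D ≤ b
  · obtain ⟨u, hmu, huD, hu, hub⟩ := h₁ m hcm hmb
    exact ⟨u, hmu, huD, hu, by omega⟩
  by_cases hbm : b ≤ m
  · exact h₂ m hbm hmb'
  · exact ⟨b, by omega, by omega, hb, hbb'⟩

/-- Near `b`, either the last occurrence before `b` or the first one after it is close enough. -/
theorem OccurrencesDense.glue {ℓ D R c b b' : ℕ} (h₁ : OccurrencesDense L P ℓ D c b)
    (htail : c + R + L ℓ < b → OccurrenceEndsNear L P ℓ R b)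
    (hhead : b + R ≤ b' → ∃ u, b < u ∧ u ≤ b + R ∧ Occurrence L P ℓ u ∧ u + L ℓ ≤ b')
    (h₂ : OccurrencesDense L P ℓ D b b') (hD : 2 * R + L ℓ ≤ D) (hbb' : b ≤ b') :
    OccurrencesDense L P ℓ D c b' := by
  intro m hcm hmb'
  by_cases hmb : m + D ≤ b
  · obtain ⟨u, hmu, huD, hu, hub⟩ := h₁ m hcm hmb
    exact ⟨u, hmu, huD, hu, by omega⟩
  by_cases hbm : b ≤ m
  · exact h₂ m hbm hmb'
  by_cases hmR : m + R + L ℓ < b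
  · obtain ⟨u, hu, hbu, hub⟩ := htail (by omega)
    exact ⟨u, by omega, by omega, hu, by omega⟩
  · obtain ⟨u, hbu, huR, hu, hub'⟩ := hhead (by omega)
    exact ⟨u, by omega, by omega, hu, hub'⟩

theorem OccurrencesDense.translate {ℓ D σ t : ℕ} (hσt : (σ, t) ∈ P)
    (h : OccurrencesDense L P ℓ D 0 (L σ)) : OccurrencesDense L P ℓ D t (t + L σ) := by
  intro m htm hmb
  obtain ⟨u, hmu, huD, hu, huσ⟩ := h (m - t) (Nat.zero_le _) (by omega)
  exact ⟨t + u, by omega, by omega, .nest hσt hu huσ, by omega⟩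

theorem OccurrenceEndsNear.translate {ℓ R σ t : ℕ} (hσt : (σ, t) ∈ P)
    (h : OccurrenceEndsNear L P ℓ R (L σ)) : OccurrenceEndsNear L P ℓ R (t + L σ) := by
  obtain ⟨u, hu, hσu, huσ⟩ := h
  exact ⟨t + u, .nest hσt hu huσ, by omega, by omega⟩

end Copies

def IsReserve (G L M : ℕ → ℕ) : Prop :=
  ∀ σ, M σ + G (σ + 1) + L (σ + 1) ≤ M (σ + 1)

theorem IsReserve.monotone {G L M : ℕ → ℕ} (hM : IsReserve G L M) : Monotone M :=
  monotone_nat_of_le_succ fun σ => by have := hM σ; omega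

theorem IsReserve.add_le {G L M : ℕ → ℕ} (hM : IsReserve G L M) {ℓ : ℕ} (hℓ : 1 ≤ ℓ) :
    G ℓ + L ℓ ≤ M ℓ := by
  obtain ⟨σ, rfl⟩ : ∃ σ, ℓ = σ + 1 := ⟨ℓ - 1, by omega⟩
  have := hM σ
  omega

namespace MultiscaleFill

variable {V : ℕ → Set ℕ} {G : ℕ → ℕ} (hV : ∀ σ m, ∃ t ∈ V σ, m < t ∧ t ≤ m + G σ)
  (L M : ℕ → ℕ)

noncomputable def next (σ c : ℕ) : ℕ := Classical.choose (hV σ c)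

theorem next_mem (σ c : ℕ) : next hV σ c ∈ V σ := (Classical.choose_spec (hV σ c)).1

theorem lt_next (σ c : ℕ) : c < next hV σ c := (Classical.choose_spec (hV σ c)).2.1

theorem next_le (σ c : ℕ) : next hV σ c ≤ c + G σ := (Classical.choose_spec (hV σ c)).2.2

/-- The room `M σ` left after a window of scale `σ + 1` ensures that windows of every lower scale
still end close to `b` (see `exists_mem_fill_end`). -/
noncomputable def fill : ℕ → ℕ → ℕ → Set (ℕ × ℕ)
  | 0, _, _ => ∅
  | σ + 1, c, b =>
    if next hV (σ + 1) c + L (σ + 1) + M σ ≤ b then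
      fill σ c (next hV (σ + 1) c) ∪ {(σ + 1, next hV (σ + 1) c)} ∪
        fill (σ + 1) (next hV (σ + 1) c + L (σ + 1)) b
    else fill σ c b
termination_by σ c b => (σ, b - c)
decreasing_by
  · exact Prod.Lex.left _ _ (Nat.lt_succ_self σ)
  · exact Prod.Lex.right _ (by have := lt_next hV (σ + 1) c; omega)
  · exact Prod.Lex.left _ _ (Nat.lt_succ_self σ)

variable {hV L M}

theorem fill_zero (c b : ℕ) : fill hV L M 0 c b = ∅ := by rw [fill]

theorem fill_succ_of_le {σ c b : ℕ} (h : next hV (σ + 1) c + L (σ + 1) + M σ ≤ b) :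
    fill hV L M (σ + 1) c b = fill hV L M σ c (next hV (σ + 1) c) ∪
      {(σ + 1, next hV (σ + 1) c)} ∪ fill hV L M (σ + 1) (next hV (σ + 1) c + L (σ + 1)) b := by
  rw [fill, if_pos h]

theorem fill_succ_of_not_le {σ c b : ℕ} (h : ¬next hV (σ + 1) c + L (σ + 1) + M σ ≤ b) :
    fill hV L M (σ + 1) c b = fill hV L M σ c b := by
  rw [fill, if_neg h]

theorem mem_fill {s c b : ℕ} {p : ℕ × ℕ} (hp : p ∈ fill hV L M s c b) :
    p.1 ≤ s ∧ c < p.2 ∧ p.2 + L p.1 ≤ b ∧ p.2 ∈ V p.1 := by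
  induction s, c, b using fill.induct hV L M with
  | case1 c b => simp [fill_zero] at hp
  | case2 σ c b h ih₁ ih₂ =>
    have := lt_next hV (σ + 1) c
    rw [fill_succ_of_le h] at hp
    rcases hp with (hp | rfl) | hp
    · obtain ⟨h₁, h₂, h₃, h₄⟩ := ih₁ hp
      exact ⟨by omega, h₂, by omega, h₄⟩
    · exact ⟨le_rfl, this, by dsimp; omega, next_mem hV _ _⟩
    · obtain ⟨h₁, h₂, h₃, h₄⟩ := ih₂ hp
      exact ⟨h₁, by omega, h₃, h₄⟩
  | case3 σ c b h ih =>
    rw [fill_succ_of_not_le h] at hp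
    obtain ⟨h₁, h₂, h₃, h₄⟩ := ih hp
    exact ⟨by omega, h₂, h₃, h₄⟩

theorem pairwiseDisjoint_fill (s c b : ℕ) : (fill hV L M s c b).PairwiseDisjoint (window L) := by
  induction s, c, b using fill.induct hV L M with
  | case1 c b => simp [fill_zero]
  | case2 σ c b h ih₁ ih₂ =>
    rw [fill_succ_of_le h, Set.pairwiseDisjoint_union, Set.pairwiseDisjoint_union]
    refine ⟨⟨ih₁, Set.pairwiseDisjoint_singleton _ _, ?_⟩, ih₂, ?_⟩
    · rintro p hp q rfl -
      exact disjoint_window_of_le (mem_fill hp).2.2.1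
    · rintro p hp q hq -
      have hq' := (mem_fill hq).2.1
      refine disjoint_window_of_le ?_
      rcases hp with hp | rfl
      · have := (mem_fill hp).2.2.1
        omega
      · dsimp
        omega
  | case3 σ c b h ih => rwa [fill_succ_of_not_le h]

theorem exists_mem_fill_start (hM : IsReserve G L M) {ℓ s c b : ℕ} (hℓ : 1 ≤ ℓ) (hs : ℓ ≤ s)
    (hb : c + M ℓ ≤ b) : ∃ p ∈ fill hV L M s c b, ℓ ≤ p.1 ∧ p.2 ≤ c + M ℓ := by
  induction s, c, b using fill.induct hV L M with
  | case1 c b => omega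
  | case2 σ c b h ih₁ ih₂ =>
    have hmid : (σ + 1, next hV (σ + 1) c) ∈ fill hV L M (σ + 1) c b := by
      rw [fill_succ_of_le h]
      exact Or.inl (Or.inr rfl)
    have := next_le hV (σ + 1) c
    rcases Nat.lt_or_ge ℓ (σ + 1) with hℓσ | hℓσ
    · by_cases hnext : c + M ℓ ≤ next hV (σ + 1) c
      · obtain ⟨p, hp, hℓp, hpM⟩ := ih₁ (by omega) hnext
        refine ⟨p, ?_, hℓp, hpM⟩
        rw [fill_succ_of_le h]
        exact Or.inl (Or.inl hp)
      · exact ⟨_, hmid, hℓσ.le, by dsimp; omega⟩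
    · obtain rfl : ℓ = σ + 1 := by omega
      have := hM σ
      exact ⟨_, hmid, le_rfl, by dsimp; omega⟩
  | case3 σ c b h ih =>
    rcases Nat.lt_or_ge ℓ (σ + 1) with hℓσ | hℓσ
    · rw [fill_succ_of_not_le h]
      exact ih (by omega) hb
    · obtain rfl : ℓ = σ + 1 := by omega
      have := hM σ
      have := next_le hV (σ + 1) c
      omega

theorem exists_mem_fill_end (hM : IsReserve G L M) {ℓ s c b : ℕ} (hℓ : 1 ≤ ℓ) (hs : ℓ ≤ s)
    (hb : c + M ℓ ≤ b) : ∃ t, (ℓ, t) ∈ fill hV L M s c b ∧ b ≤ t + L ℓ + M ℓ := by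
  induction s, c, b using fill.induct hV L M with
  | case1 c b => omega
  | case2 σ c b h ih₁ ih₂ =>
    rw [fill_succ_of_le h]
    rcases Nat.lt_or_ge ℓ (σ + 1) with hℓσ | hℓσ
    · obtain ⟨t, ht, hbt⟩ := ih₂ (by omega) (by have := hM.monotone (show ℓ ≤ σ by omega); omega)
      exact ⟨t, Or.inr ht, hbt⟩
    · obtain rfl : ℓ = σ + 1 := by omega
      by_cases hroom : next hV (σ + 1) c + L (σ + 1) + M (σ + 1) ≤ b
      · obtain ⟨t, ht, hbt⟩ := ih₂ le_rfl hroom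
        exact ⟨t, Or.inr ht, hbt⟩
      · exact ⟨_, Or.inl (Or.inr rfl), by omega⟩
  | case3 σ c b h ih =>
    rcases Nat.lt_or_ge ℓ (σ + 1) with hℓσ | hℓσ
    · rw [fill_succ_of_not_le h]
      exact ih (by omega) hb
    · obtain rfl : ℓ = σ + 1 := by omega
      have := hM σ
      have := next_le hV (σ + 1) c
      omega

theorem exists_occurrence_fill_start {P : Set (ℕ × ℕ)} (hL : Monotone L) (hM : IsReserve G L M)
    {ℓ s c b : ℕ} (hℓ : 1 ≤ ℓ) (hs : ℓ ≤ s) (hP : fill hV L M s c b ⊆ P) (hb : c + M ℓ ≤ b) :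
    ∃ u, c < u ∧ u ≤ c + M ℓ ∧ Occurrence L P ℓ u ∧ u + L ℓ ≤ b := by
  obtain ⟨p, hp, hℓp, hpM⟩ := exists_mem_fill_start hM hℓ hs hb
  obtain ⟨-, hcp, hpb, -⟩ := mem_fill hp
  exact ⟨p.2, hcp, hpM, .base (hP hp) hℓp, by have := hL hℓp; omega⟩

theorem occurrencesDense_fill {P : Set (ℕ × ℕ)} (hL : Monotone L) (hM : IsReserve G L M)
    {ℓ s c b : ℕ} (hℓ : 1 ≤ ℓ) (hs : ℓ ≤ s) (hP : fill hV L M s c b ⊆ P)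
    (hcov : ∀ σ, ℓ < σ → σ ≤ s → OccurrencesDense L P ℓ (2 * M ℓ + L ℓ + 1) 0 (L σ) ∧
      OccurrenceEndsNear L P ℓ (M ℓ) (L σ)) :
    OccurrencesDense L P ℓ (2 * M ℓ + L ℓ + 1) c b := by
  have hGLM := hM.add_le hℓ
  induction s, c, b using fill.induct hV L M with
  | case1 c b => omega
  | case2 σ c b h ih₁ ih₂ =>
    set t := next hV (σ + 1) c
    rw [fill_succ_of_le h] at hP
    have hmid : (σ + 1, t) ∈ P := hP (Or.inl (Or.inr rfl))
    have hleft : OccurrencesDense L P ℓ (2 * M ℓ + L ℓ + 1) c t := by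
      by_cases hℓσ : ℓ ≤ σ
      · exact ih₁ hℓσ (fun p hp => hP (Or.inl (Or.inl hp))) fun τ h₁ h₂ => hcov τ h₁ (by omega)
      · obtain rfl : ℓ = σ + 1 := by omega
        exact .of_lt (by have := next_le hV (σ + 1) c; omega)
    have hwindow : OccurrencesDense L P ℓ (2 * M ℓ + L ℓ + 1) t (t + L (σ + 1)) ∧
        (t + M ℓ + L ℓ < t + L (σ + 1) → OccurrenceEndsNear L P ℓ (M ℓ) (t + L (σ + 1))) := by
      rcases Nat.lt_or_ge ℓ (σ + 1) with hℓσ | hℓσ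
      · obtain ⟨h₁, h₂⟩ := hcov (σ + 1) hℓσ le_rfl
        exact ⟨h₁.translate hmid, fun _ => h₂.translate hmid⟩
      · obtain rfl : ℓ = σ + 1 := by omega
        exact ⟨.of_lt (by omega), fun h => by omega⟩
    have hright := ih₂ hs (fun p hp => hP (Or.inr hp)) hcov
    have hLℓ : L ℓ ≤ L (σ + 1) := hL hs
    exact hleft.glue_at (.base hmid hs) (by omega) <| hwindow.1.glue hwindow.2
      (exists_occurrence_fill_start hL hM hℓ hs fun p hp => hP (Or.inr hp)) hright
      (by omega) (by omega)
  | case3 σ c b h ih =>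
    rw [fill_succ_of_not_le h] at hP
    by_cases hℓσ : ℓ ≤ σ
    · exact ih hℓσ hP fun τ h₁ h₂ => hcov τ h₁ (by omega)
    · obtain rfl : ℓ = σ + 1 := by omega
      have := hM σ
      have := next_le hV (σ + 1) c
      exact .of_lt (by omega)

variable (hV L M) in
def placements : Set (ℕ × ℕ) := {p | ∃ j, p ∈ fill hV L M j (L j) (L (j + 1))}

theorem mem_placements (hL : Monotone L) {p : ℕ × ℕ} (hp : p ∈ placements hV L M) :
    p.2 ∈ V p.1 ∧ L p.1 < p.2 := by
  obtain ⟨j, hp⟩ := hp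
  obtain ⟨hpj, hjp, -, hpV⟩ := mem_fill hp
  exact ⟨hpV, (hL hpj).trans_lt hjp⟩

theorem pairwiseDisjoint_placements (hL : Monotone L) :
    (placements hV L M).PairwiseDisjoint (window L) := by
  rintro p ⟨j, hp⟩ q ⟨j', hq⟩ hpq
  have hp' := mem_fill hp
  have hq' := mem_fill hq
  rcases lt_trichotomy j j' with hjj' | rfl | hj'j
  · exact disjoint_window_of_le (by have := hL (show j + 1 ≤ j' from hjj'); omega)
  · exact pairwiseDisjoint_fill j _ _ hp hq hpq
  · exact (disjoint_window_of_le (by have := hL (show j' + 1 ≤ j from hj'j); omega)).symm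

theorem occurrencesDense_stage (hL : Monotone L) (hM : IsReserve G L M)
    (hLM : ∀ j, L j + M j ≤ L (j + 1)) :
    ∀ j ℓ, 1 ≤ ℓ → ℓ ≤ j →
      OccurrencesDense L (placements hV L M) ℓ (2 * M ℓ + L ℓ + 1) 0 (L (j + 1)) ∧
      OccurrenceEndsNear L (placements hV L M) ℓ (M ℓ) (L (j + 1)) := by
  intro j
  induction j using Nat.strong_induction_on with
  | _ j IH =>
  intro ℓ hℓ hℓj
  have hsub : fill hV L M j (L j) (L (j + 1)) ⊆ placements hV L M := fun p hp => ⟨j, hp⟩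
  have hroom : L j + M ℓ ≤ L (j + 1) := by have := hM.monotone hℓj; have := hLM j; omega
  have hprev : ℓ < j → OccurrencesDense L (placements hV L M) ℓ (2 * M ℓ + L ℓ + 1) 0 (L j) ∧
      OccurrenceEndsNear L (placements hV L M) ℓ (M ℓ) (L j) := fun hℓj' => by
    obtain ⟨j', rfl⟩ : ∃ j', j = j' + 1 := ⟨j - 1, by omega⟩
    exact IH j' (by omega) ℓ hℓ (by omega)
  refine ⟨?_, ?_⟩
  · refine OccurrencesDense.glue ?_ (fun h => (hprev ?_).2)
      (exists_occurrence_fill_start hL hM hℓ hℓj hsub)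
      (occurrencesDense_fill hL hM hℓ hℓj hsub fun σ hℓσ hσj => ?_) (by omega) (by omega)
    · by_cases hℓj' : ℓ < j
      · exact (hprev hℓj').1
      · obtain rfl : ℓ = j := by omega
        exact .of_lt (by omega)
    · by_contra hℓj'
      obtain rfl : ℓ = j := by omega
      omega
    · obtain ⟨σ', rfl⟩ : ∃ σ', σ = σ' + 1 := ⟨σ - 1, by omega⟩
      exact IH σ' (by omega) ℓ hℓ (by omega)
  · obtain ⟨t, ht, hbt⟩ := exists_mem_fill_end hM hℓ hℓj hroom
    exact ⟨t, .base (hsub ht) le_rfl, hbt, (mem_fill ht).2.2.1⟩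

theorem exists_occurrence_placements (hL : StrictMono L) (hM : IsReserve G L M)
    (hLM : ∀ j, L j + M j ≤ L (j + 1)) {ℓ : ℕ} (hℓ : 1 ≤ ℓ) (m : ℕ) :
    ∃ u, m < u ∧ u ≤ m + (2 * M ℓ + L ℓ + 1) ∧ Occurrence L (placements hV L M) ℓ u := by
  set j := ℓ + m + (2 * M ℓ + L ℓ + 1)
  have : j + 1 ≤ L (j + 1) := hL.le_apply
  obtain ⟨u, hmu, huD, hu, -⟩ :=
    (occurrencesDense_stage hL.monotone hM hLM j ℓ hℓ (by omega)).1 m (Nat.zero_le m) (by omega)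
  exact ⟨u, hmu, huD, hu⟩

/-- `(L σ, M σ)`: the window length and the reserve of scale `σ`, when admissible positions for
windows of scale `σ` and length `len` have gaps at most `g σ len`. -/
def scaleLengths (g : ℕ → ℕ → ℕ) (L₀ : ℕ) : ℕ → ℕ × ℕ
  | 0 => (L₀ + 1, 0)
  | σ + 1 =>
    let l := (scaleLengths g L₀ σ).1 + (scaleLengths g L₀ σ).2 + 1
    (l, (scaleLengths g L₀ σ).2 + g (σ + 1) l + l)

end MultiscaleFill

open MultiscaleFill in
theorem exists_placements (W : ℕ → ℕ → Set ℕ) (hW : ∀ σ len, Syndetic (W σ len)) (L₀ : ℕ) :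
    ∃ (L : ℕ → ℕ) (P : Set (ℕ × ℕ)), StrictMono L ∧ L₀ < L 0 ∧
      (∀ p ∈ P, p.2 ∈ W p.1 (L p.1) ∧ L p.1 < p.2) ∧ P.PairwiseDisjoint (window L) ∧
      ∀ ℓ, 1 ≤ ℓ → ∃ D, ∀ m, ∃ u, m < u ∧ u ≤ m + D ∧ Occurrence L P ℓ u := by
  choose g hg using fun σ len => syndetic_iff_exists_gap.1 (hW σ len)
  set L := fun σ => (scaleLengths g L₀ σ).1
  set M := fun σ => (scaleLengths g L₀ σ).2
  have hL : StrictMono L := strictMono_nat_of_lt_succ fun σ => by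
    simp only [L, scaleLengths]
    omega
  have hM : IsReserve (fun σ => g σ (L σ)) L M := fun σ => le_of_eq rfl
  have hLM : ∀ σ, L σ + M σ ≤ L (σ + 1) := fun σ => by
    simp only [L, M, scaleLengths]
    omega
  have hV : ∀ σ m, ∃ t ∈ W σ (L σ), m < t ∧ t ≤ m + g σ (L σ) := fun σ => hg σ (L σ)
  exact ⟨L, placements hV L M, hL, by simp [L, scaleLengths],
    fun p hp => mem_placements hL.monotone hp, pairwiseDisjoint_placements hL.monotone,
    fun ℓ hℓ => ⟨_, exists_occurrence_placements hL hM hLM hℓ⟩⟩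

def Avoids (P : Set ℕ) (len : ℕ) : Set ℕ := {t | ∀ c ≤ len, t + c ∉ P}

theorem syndetic_avoids_of_not_piecewiseSyndetic {P : Set ℕ} (hP : ¬PiecewiseSyndetic P)
    (len : ℕ) : Syndetic (Avoids P len) := by
  simp only [PiecewiseSyndetic, not_exists, not_forall, not_and, exists_prop] at hP
  obtain ⟨k, hk⟩ := hP (len + 1)
  refine syndetic_iff_exists_gap.2 ⟨k + 1, fun m => ?_⟩
  obtain ⟨s, hms, hsk, hs⟩ := hk m
  refine ⟨s + 1, fun c hc => ?_, by omega, by omega⟩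
  rw [add_assoc, add_comm 1 c]
  exact hs (c + 1) (by omega) (by omega)

theorem Syndetic.inter_avoids {R P : Set ℕ} (hR : Syndetic R)
    (hP : ∀ len, Syndetic (Avoids P len)) (len : ℕ) : Syndetic (R ∩ Avoids P len) := by
  obtain ⟨g₁, hg₁⟩ := syndetic_iff_exists_gap.1 hR
  obtain ⟨g₂, hg₂⟩ := syndetic_iff_exists_gap.1 (hP (len + g₁))
  refine syndetic_iff_exists_gap.2 ⟨g₂ + g₁, fun m => ?_⟩
  obtain ⟨s, hs, hms, hsg⟩ := hg₂ m
  obtain ⟨t, ht, hst, htg⟩ := hg₁ (s - 1)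
  refine ⟨t, ⟨ht, fun c hc => ?_⟩, by omega, by omega⟩
  rw [show t + c = s + (t - s + c) by omega]
  exact hs _ (by omega)

/-- If `A ∩ R(x, U)` were not piecewise syndetic, the times `t` at which the orbit of `x` shadows
its initial segment of length `len` while `t + [0, len]` misses `A ∩ R(x, U)` would be syndetic.
Copying an initial time `a ∉ A` with `T^a x` near `U` into such windows, at all scales, builds a
uniformly recurrent set of times at which `T^n x ∈ U` and `n ∉ A`, which `A` must meet. -/
theorem DynThick.piecewiseSyndetic_inter_retTimes {A : Set ℕ} (hA : DynThick A)
    {S : MetricDynSystem} (hS : S.Minimal) (x : S.carrier) {U : Set S.carrier} (hU : IsOpen U)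
    (hne : U.Nonempty) : PiecewiseSyndetic (A ∩ RetTimes S x U) := by
  by_contra hPS
  have havoids := syndetic_avoids_of_not_piecewiseSyndetic hPS
  obtain ⟨p₀, hp₀⟩ := hne
  obtain ⟨r, hr, hball⟩ := Metric.isOpen_iff.1 hU p₀ hp₀
  obtain ⟨a, ⟨ha, hap₀⟩, haA⟩ := ((hS.syndetic_retTimes x Metric.isOpen_ball
    (Metric.nonempty_ball.2 (half_pos hr))).inter_avoids havoids 0).nonempty
  set W : ℕ → ℕ → Set ℕ := fun σ len => RetTimes S x
    (⋂ i ∈ Set.Iio len, S.map^[i] ⁻¹' Metric.ball (S.map^[i] x) (r / 2 / 2 ^ (σ + 1))) ∩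
      Avoids (A ∩ RetTimes S x U) len
  have hW : ∀ σ len, Syndetic (W σ len) := fun σ len =>
    (hS.syndetic_retTimes x ((Set.finite_Iio len).isOpen_biInter fun i _ =>
      Metric.isOpen_ball.preimage (S.continuous_map.iterate i))
      ⟨x, Set.mem_iInter₂.2 fun i _ => Metric.mem_ball_self (by positivity)⟩).inter_avoids
      havoids len
  obtain ⟨L, P, hL, haL, hP, hdisj, hocc⟩ := exists_placements W hW a
  have haP : ∀ p ∈ P, a < p.2 := fun p hp =>
    haL.trans_le ((hL.monotone (Nat.zero_le _)).trans (hP p hp).2.le)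
  have hclose : ∀ p ∈ P, ∀ i < L p.1,
      dist (S.map^[p.2 + i] x) (S.map^[i] x) ≤ r / 2 / 2 ^ (p.1 + 1) := fun p hp i hi => by
    have := Set.mem_iInter₂.1 (hP p hp).1.1.2 i hi
    rw [Set.mem_preimage, Metric.mem_ball, ← Function.iterate_add_apply, add_comm] at this
    exact this.le
  have hretU : ∀ n, CopySet L P a n → n ∈ RetTimes S x U := fun n hn =>
    ⟨ha.trans_le hn.le, hball <| calc
      dist (S.map^[n] x) p₀ ≤ dist (S.map^[n] x) (S.map^[a] x) + dist (S.map^[a] x) p₀ :=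
        dist_triangle _ _ _
      _ < r / 2 + r / 2 :=
        add_lt_add (hn.dist_lt (f := fun n => S.map^[n] x) (half_pos hr) hL
          (fun p hp => (hP p hp).2) hclose) hap₀
      _ = r := add_halves r⟩
  have hnotA : ∀ n, CopySet L P a n → n ∉ A ∩ RetTimes S x U := fun n hn => by
    induction hn with
    | base => simpa using haA 0 le_rfl
    | copy hσt _ hu _ => exact (hP _ hσt).1.2 _ hu.le
  obtain ⟨n, hnA, -, hn⟩ := hA.exists_mem_of_uniformlyRecurrentSet
    (CopySet.uniformlyRecurrentSet a hL hdisj haP hocc) ⟨a, .base⟩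
  exact hnotA n hn ⟨hnA, hretU n hn⟩

theorem DynThick.exists_robustlySyndetic {A : Set ℕ} (hA : DynThick A) :
    ∃ C : Set (Set ℕ), RobustlySyndetic C ∧
      ∃ H : Set ℕ → Set ℕ, (∀ B ∈ C, Thick (H B)) ∧ A = ⋃ B ∈ C, B ∩ H B := by
  refine ⟨{B | Thick (A ∪ Bᶜ)}, ?_, fun B => A ∪ Bᶜ, fun B hB => hB, ?_⟩
  · rintro D ⟨S, hS, x, U, hU, hne, hRD⟩
    obtain ⟨B, hBR, hB, hthick⟩ := (hA.piecewiseSyndetic_inter_retTimes hS x hU hne)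
      |>.exists_syndetic_thick_union_compl (hS.syndetic_retTimes x hU hne) Set.inter_subset_right
    refine ⟨B, hthick.mono (Set.union_subset_union_left _ Set.inter_subset_left), ?_⟩
    rwa [Set.inter_eq_right.2 (hBR.trans hRD)]
  · ext a
    simp only [Set.mem_iUnion, Set.mem_ofPred_eq, Set.mem_inter_iff, Set.mem_union,
      Set.mem_compl_iff, exists_prop]
    refine ⟨fun ha => ⟨{a}, fun F => ⟨a + 1, by omega, fun f _ => Or.inr ?_⟩, rfl, Or.inl ha⟩, ?_⟩
    · rw [Set.mem_compl_iff, Set.mem_singleton_iff]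
      omega
    · rintro ⟨B, -, haB, ha | haB'⟩
      exacts [ha, absurd haB haB']

theorem dynThick_iff_robustlySyndetic_structure (A : Set ℕ) :
    DynThick A ↔
      ∃ C : Set (Set ℕ), RobustlySyndetic C ∧
        ∃ H : Set ℕ → Set ℕ, (∀ B ∈ C, Thick (H B)) ∧ A = ⋃ B ∈ C, B ∩ H B :=
  ⟨DynThick.exists_robustlySyndetic, fun ⟨_, hC, _, hH, hA⟩ => .of_robustlySyndetic hC hH hA⟩
end

section
/- Let ℱ be a family of subsets of ℕ such that every member of ℱ ⊓ ℱ* := {A ∩ B : A ∈ ℱ, B ∈ ℱ*} is infinite. If the dual family ℱ* is σ-compact, then every A ∈ ℱ admits a partition A = A₁ ∪ A₂ into two disjoint sets with A₁, A₂ ∈ ℱ. -/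
/-- A family of subsets of `ℕ`: an upward-closed collection. -/
def UpwardClosed (F : Set (Set ℕ)) : Prop := ∀ ⦃A B : Set ℕ⦄, A ∈ F → A ⊆ B → B ∈ F

/-- The dual family `F*`: all sets meeting every member of `F`. -/
def dualFamily (F : Set (Set ℕ)) : Set (Set ℕ) := {B : Set ℕ | ∀ A ∈ F, (A ∩ B).Nonempty}

/-- A family `G` is compact if for every `B ∈ G*` there is `M` with `B ∩ {1, …, M} ∈ G*`. -/
def CompactFamily (G : Set (Set ℕ)) : Prop :=
  UpwardClosed G ∧ ∀ B ∈ dualFamily G, ∃ M : ℕ, B ∩ Set.Icc 1 M ∈ dualFamily G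

/-- A family is σ-compact if it is a union of countably many compact families. -/
def SigmaCompactFamily (G : Set (Set ℕ)) : Prop :=
  ∃ Gs : ℕ → Set (Set ℕ), (∀ n, CompactFamily (Gs n)) ∧ G = ⋃ n, Gs n

theorem splitting_of_sigmaCompact_dual
    (F : Set (Set ℕ)) (hF : UpwardClosed F)
    (hinf : ∀ A ∈ F, ∀ B ∈ dualFamily F, (A ∩ B).Infinite)
    (hsc : SigmaCompactFamily (dualFamily F)) :
    ∀ A ∈ F, ∃ A₁ A₂ : Set ℕ,
      A = A₁ ∪ A₂ ∧ Disjoint A₁ A₂ ∧ A₁ ∈ F ∧ A₂ ∈ F := by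
  obtain ⟨Gs, hcomp, hceq⟩ := hsc
  intro A hA
  -- membership criterion: F = F**
  have mem_F : ∀ C : Set ℕ, (∀ B ∈ dualFamily F, (C ∩ B).Nonempty) → C ∈ F := by
    intro C hC
    by_contra h
    have hBc : Cᶜ ∈ dualFamily F := by
      intro A' hA'
      rcases Set.not_subset.mp (fun hs => h (hF hA' hs)) with ⟨x, hx1, hx2⟩
      exact ⟨x, hx1, hx2⟩
    rcases hC _ hBc with ⟨x, hx1, hx2⟩
    exact hx2 hx1
  have hGsub : ∀ n, Gs n ⊆ dualFamily F := by
    intro n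
    rw [hceq]
    exact Set.subset_iUnion Gs n
  -- picking lemma
  have pick : ∀ K : Set ℕ, K.Finite → ∀ n : ℕ,
      ∃ S : Set ℕ, S.Finite ∧ S ⊆ A \ K ∧ ∀ C ∈ Gs n, (C ∩ S).Nonempty := by
    intro K hK n
    have hdual : A \ K ∈ dualFamily (Gs n) := by
      intro C hC
      have hinfAC : (A ∩ C).Infinite := hinf A hA C (hGsub n hC)
      rcases (hinfAC.diff hK).nonempty with ⟨x, ⟨hxA, hxC⟩, hxK⟩
      exact ⟨x, hxC, hxA, hxK⟩
    obtain ⟨M, hM⟩ := (hcomp n).2 _ hdual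
    exact ⟨(A \ K) ∩ Set.Icc 1 M,
      (Set.finite_Icc 1 M).subset Set.inter_subset_right,
      Set.inter_subset_left, hM⟩
  -- recursive construction of cumulative finite sets
  let g : ℕ → {K : Set ℕ // K.Finite} := fun n =>
    Nat.rec ⟨∅, Set.finite_empty⟩
      (fun m Km => ⟨Km.1 ∪ (pick Km.1 Km.2 (m / 2)).choose,
        Km.2.union (pick Km.1 Km.2 (m / 2)).choose_spec.1⟩) n
  let S : ℕ → Set ℕ := fun n => (pick (g n).1 (g n).2 (n / 2)).choose
  have hspec : ∀ n, (S n).Finite ∧ S n ⊆ A \ (g n).1 ∧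
      ∀ C ∈ Gs (n / 2), (C ∩ S n).Nonempty := fun n =>
    (pick (g n).1 (g n).2 (n / 2)).choose_spec
  have hgsucc : ∀ n, (g (n + 1)).1 = (g n).1 ∪ S n := fun n => rfl
  have hmono : ∀ m n, m ≤ n → (g m).1 ⊆ (g n).1 := by
    intro m n hmn
    induction n with
    | zero => simp [Nat.le_zero.mp hmn]
    | succ k ih =>
      rcases Nat.lt_or_ge m (k + 1) with h | h
      · exact (ih (Nat.lt_succ_iff.mp h)).trans (by rw [hgsucc]; exact Set.subset_union_left)
      · simp [Nat.le_antisymm hmn h]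
  have hSsubg : ∀ n, S n ⊆ (g (n + 1)).1 := by
    intro n
    rw [hgsucc]
    exact Set.subset_union_right
  -- pairwise disjointness of the pieces
  have hdisj : ∀ i j : ℕ, i < j → ∀ x, x ∈ S i → x ∉ S j := by
    intro i j hij x hxi hxj
    have h1 : x ∈ (g j).1 := hmono (i + 1) j hij (hSsubg i hxi)
    exact ((hspec j).2.1 hxj).2 h1
  refine ⟨⋃ n, S (2 * n), A \ ⋃ n, S (2 * n), ?_, Set.disjoint_sdiff_right, ?_, ?_⟩
  · have hsub : (⋃ n, S (2 * n)) ⊆ A := by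
      intro x hx
      rcases Set.mem_iUnion.mp hx with ⟨n, hn⟩
      exact ((hspec (2 * n)).2.1 hn).1
    rw [Set.union_diff_cancel hsub]
  · apply mem_F
    intro B hB
    rw [hceq] at hB
    rcases Set.mem_iUnion.mp hB with ⟨n, hBn⟩
    have hidx : 2 * n / 2 = n := by omega
    rcases (hspec (2 * n)).2.2 B (by rw [hidx]; exact hBn) with ⟨x, hxB, hxS⟩
    exact ⟨x, Set.mem_iUnion.mpr ⟨n, hxS⟩, hxB⟩
  · apply mem_F
    intro B hB
    rw [hceq] at hB
    rcases Set.mem_iUnion.mp hB with ⟨n, hBn⟩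
    have hidx : (2 * n + 1) / 2 = n := by omega
    rcases (hspec (2 * n + 1)).2.2 B (by rw [hidx]; exact hBn) with ⟨x, hxB, hxS⟩
    refine ⟨x, ⟨((hspec (2 * n + 1)).2.1 hxS).1, ?_⟩, hxB⟩
    intro hx
    rcases Set.mem_iUnion.mp hx with ⟨m, hm⟩
    rcases Nat.lt_or_ge (2 * m) (2 * n + 1) with h | h
    · exact hdisj (2 * m) (2 * n + 1) h x hm hxS
    · exact hdisj (2 * n + 1) (2 * m) (by omega) x hxS hm
end

section
/- Let ℱ be a family of subsets of ℕ. Suppose there exist pairwise disjoint sets B₁, B₂, … ∈ ℱ such that for every B ∈ ℱ with B ⊆ ⋃_{i=1}^{∞} B_i there exists i ∈ ℕ with B ∩ B_i infinite. Then the dual family ℱ* is not σ-compact. -/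
theorem dual_not_sigmaCompact_of_disjoint_trap
    (F : Set (Set ℕ)) (hF : UpwardClosed F)
    (B : ℕ → Set ℕ) (hBF : ∀ i, B i ∈ F)
    (hdisj : ∀ i j : ℕ, i ≠ j → Disjoint (B i) (B j))
    (htrap : ∀ C ∈ F, C ⊆ (⋃ i : ℕ, B i) → ∃ i : ℕ, (C ∩ B i).Infinite) :
    ¬ SigmaCompactFamily (dualFamily F) := by
  rintro ⟨Gs, hG, hunion⟩
  -- the tail unions
  set E : ℕ → Set ℕ := fun n => ⋃ j : ℕ, B (n + j) with hE
  -- each Gs n is contained in F*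
  have hGsub : ∀ n, Gs n ⊆ dualFamily F := by
    intro n X hX
    rw [hunion]
    exact Set.mem_iUnion.2 ⟨n, hX⟩
  -- E n ∈ (Gs n)*
  have hEdual : ∀ n, E n ∈ dualFamily (Gs n) := by
    intro n X hX
    obtain ⟨x, hxB, hxX⟩ := hGsub n hX (B n) (hBF n)
    exact ⟨x, hxX, Set.mem_iUnion.2 ⟨0, by simpa using hxB⟩⟩
  -- choose finite truncation bounds
  have hchoice : ∀ n, ∃ M : ℕ, E n ∩ Set.Icc 1 M ∈ dualFamily (Gs n) :=
    fun n => (hG n).2 (E n) (hEdual n)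
  choose M hM using hchoice
  set C : Set ℕ := ⋃ n : ℕ, E n ∩ Set.Icc 1 (M n) with hC
  -- the complement of C is not in F*
  have hcompl : Cᶜ ∉ dualFamily F := by
    rw [hunion]
    intro hmem
    obtain ⟨n, hn⟩ := Set.mem_iUnion.1 hmem
    obtain ⟨x, hxc, hx⟩ := hM n Cᶜ hn
    exact hxc (Set.mem_iUnion.2 ⟨n, hx⟩)
  -- so there is A ∈ F with A ⊆ C
  have hA : ∃ A ∈ F, A ⊆ C := by
    by_contra h
    push_neg at h
    apply hcompl
    intro A hAF
    obtain ⟨x, hxA, hxC⟩ := Set.not_subset.1 (h A hAF)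
    exact ⟨x, hxA, hxC⟩
  obtain ⟨A, hAF, hAC⟩ := hA
  -- A ⊆ ⋃ i, B i
  have hAsub : A ⊆ ⋃ i : ℕ, B i := by
    intro x hx
    obtain ⟨n, hn⟩ := Set.mem_iUnion.1 (hAC hx)
    obtain ⟨j, hj⟩ := Set.mem_iUnion.1 hn.1
    exact Set.mem_iUnion.2 ⟨n + j, hj⟩
  obtain ⟨i, hi⟩ := htrap A hAF hAsub
  -- but A ∩ B i is finite
  apply hi
  have hsub : A ∩ B i ⊆ ⋃ n ∈ Finset.range (i + 1), Set.Icc 1 (M n) := by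
    rintro x ⟨hxA, hxB⟩
    obtain ⟨n, hn⟩ := Set.mem_iUnion.1 (hAC hxA)
    obtain ⟨j, hj⟩ := Set.mem_iUnion.1 hn.1
    by_cases hni : n ≤ i
    · exact Set.mem_biUnion (Finset.mem_range.2 (Nat.lt_succ_of_le hni)) hn.2
    · exfalso
      have hne : n + j ≠ i := by omega
      exact (hdisj (n + j) i hne).le_bot ⟨hj, hxB⟩
  exact Set.Finite.subset (Set.Finite.biUnion (Finset.range (i + 1)).finite_toSet
    (fun n _ => Set.finite_Icc 1 (M n))) hsub
end

section
/- For every syndetic, idempotent filter ℱ on ℕ and every minimal left ideal L of the semigroup (βℕ, +), there exists an idempotent ultrafilter p ∈ L with ℱ ⊆ p. -/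
/-- Addition on `βℕ`: `A ∈ p + q ↔ {n | A - n ∈ q} ∈ p`, where `A - n = {m | m + n ∈ A}`. -/
def uAdd (p q : Ultrafilter ℕ) : Ultrafilter ℕ :=
  p.bind fun n => q.map fun m => m + n

/-- A left ideal of `(βℕ, +)`. -/
def IsLeftIdeal (L : Set (Ultrafilter ℕ)) : Prop :=
  L.Nonempty ∧ ∀ p : Ultrafilter ℕ, ∀ q ∈ L, uAdd p q ∈ L

/-- A minimal left ideal of `(βℕ, +)`. -/
def IsMinimalLeftIdeal (L : Set (Ultrafilter ℕ)) : Prop :=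
  IsLeftIdeal L ∧ ∀ L' : Set (Ultrafilter ℕ), IsLeftIdeal L' → L' ⊆ L → L' = L

/-- A filter of subsets of `ℕ`: an upward-closed collection closed under finite
intersections. -/
def IsSetFilter (F : Set (Set ℕ)) : Prop :=
  (∀ ⦃A B : Set ℕ⦄, A ∈ F → A ⊆ B → B ∈ F) ∧
    ∀ ⦃A B : Set ℕ⦄, A ∈ F → B ∈ F → A ∩ B ∈ F

/-- `F` is idempotent: `F ⊆ F + F`, i.e. `A - F := {n | A - n ∈ F}` belongs to `F`
for every `A ∈ F`. -/
def IdempotentFam (F : Set (Set ℕ)) : Prop :=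
  ∀ A ∈ F, {n : ℕ | 0 < n ∧ NSub A n ∈ F} ∈ F

section Aux

attribute [local instance] Ultrafilter.add Ultrafilter.addSemigroup

lemma mem_uAdd {p q : Ultrafilter ℕ} {A : Set ℕ} :
    A ∈ uAdd p q ↔ {n | {m | m + n ∈ A} ∈ q} ∈ p := Iff.rfl

lemma mem_add' {p q : Ultrafilter ℕ} {A : Set ℕ} :
    A ∈ p + q ↔ {n | {m | n + m ∈ A} ∈ q} ∈ p :=
  Ultrafilter.eventually_add p q (· ∈ A)

lemma uAdd_eq (p q : Ultrafilter ℕ) : uAdd p q = p + q := by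
  apply Ultrafilter.coe_injective
  apply Filter.ext
  intro A
  rw [Ultrafilter.mem_coe, Ultrafilter.mem_coe, mem_uAdd, mem_add']
  simp [Nat.add_comm]

lemma uAdd_pure (i : ℕ) (q : Ultrafilter ℕ) : uAdd (pure i) q = q.map (· + i) := by
  apply Ultrafilter.coe_injective
  apply Filter.ext
  intro A
  rfl

lemma uAdd_assoc (p q r : Ultrafilter ℕ) : uAdd p (uAdd q r) = uAdd (uAdd p q) r := by
  simp only [uAdd_eq]; exact (add_assoc p q r).symm

lemma continuous_uAdd_right (q : Ultrafilter ℕ) : Continuous (fun p => uAdd p q) := by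
  have : (fun p => uAdd p q) = (· + q) := funext fun p => uAdd_eq p q
  rw [this]
  exact Ultrafilter.continuous_add_left q

/-- A minimal left ideal is closed. -/
lemma minimal_isClosed {L : Set (Ultrafilter ℕ)} (hL : IsMinimalLeftIdeal L) : IsClosed L := by
  obtain ⟨⟨⟨q0, hq0⟩, hid⟩, hmin⟩ := hL
  have hrange : Set.range (fun p => uAdd p q0) = L := by
    apply hmin
    · constructor
      · exact ⟨uAdd q0 q0, ⟨q0, rfl⟩⟩
      · rintro p _ ⟨r, rfl⟩
        exact ⟨uAdd p r, (uAdd_assoc p r q0).symm⟩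
    · rintro _ ⟨r, rfl⟩
      exact hid r q0 hq0
  rw [← hrange]
  exact (isCompact_range (continuous_uAdd_right q0)).isClosed

/-- A syndetic set belongs to some element of any left ideal. -/
lemma syndetic_mem_ideal {L : Set (Ultrafilter ℕ)} (hL : IsLeftIdeal L)
    {A : Set ℕ} (hA : Syndetic A) : ∃ p ∈ L, A ∈ p := by
  obtain ⟨⟨q0, hq0⟩, hid⟩ := hL
  obtain ⟨N, hN, hsyn⟩ := hA
  set q1 : Ultrafilter ℕ := uAdd (pure 1) q0 with hq1def
  have hq1 : q1 ∈ L := hid _ q0 hq0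
  have hpos : {m : ℕ | 0 < m} ∈ q1 := by
    rw [hq1def, uAdd_pure]
    exact q0.mem_of_superset Filter.univ_mem (fun m _ => Nat.succ_pos m)
  have hcover : {m : ℕ | 0 < m} ⊆ ⋃ i ∈ Set.Icc 1 N, {m : ℕ | m + i ∈ A} := by
    intro m hm
    obtain ⟨i, hi1, hiN, hiA⟩ := hsyn m hm
    exact Set.mem_biUnion ⟨hi1, hiN⟩ hiA
  have hU : (⋃ i ∈ Set.Icc 1 N, {m : ℕ | m + i ∈ A}) ∈ q1 :=
    q1.mem_of_superset hpos hcover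
  obtain ⟨i, _, hiq⟩ := (Ultrafilter.finite_biUnion_mem_iff (Set.finite_Icc 1 N)).mp hU
  refine ⟨uAdd (pure i) q1, hid _ q1 hq1, ?_⟩
  rw [uAdd_pure]
  exact hiq

theorem syndetic_idempotent_aux
    (F : Set (Set ℕ)) (hfil : IsSetFilter F)
    (hsyn : ∀ A ∈ F, Syndetic A) (hidem : IdempotentFam F)
    (L : Set (Ultrafilter ℕ)) (hL : IsMinimalLeftIdeal L) :
    ∃ p ∈ L, uAdd p p = p ∧ ∀ A ∈ F, A ∈ p := by
  have hLclosed := minimal_isClosed hL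
  obtain ⟨hLideal, _⟩ := hL
  -- the compact subsemigroup
  set C : Set (Ultrafilter ℕ) := {p | p ∈ L ∧ ∀ A ∈ F, A ∈ p} with hCdef
  -- C nonempty via compactness
  have hCne : C.Nonempty := by
    set F' : Set (Set ℕ) := insert Set.univ F with hF'def
    haveI : Nonempty F' := ⟨⟨Set.univ, Set.mem_insert _ _⟩⟩
    have hsyn' : ∀ A ∈ F', Syndetic A := by
      rintro A (rfl | hA)
      · exact ⟨1, Nat.one_pos, fun m _ => ⟨1, le_refl 1, le_refl 1, Set.mem_univ _⟩⟩
      · exact hsyn A hA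
    set Z : F' → Set (Ultrafilter ℕ) := fun A => {p | (A : Set ℕ) ∈ p} ∩ L with hZdef
    have hZclosed : ∀ A : F', IsClosed (Z A) :=
      fun A => (ultrafilter_isClosed_basic (A : Set ℕ)).inter hLclosed
    have hZne : ∀ A : F', (Z A).Nonempty := by
      intro A
      obtain ⟨p, hp, hpA⟩ := syndetic_mem_ideal hLideal (hsyn' A A.2)
      exact ⟨p, hpA, hp⟩
    have hdir : Directed (· ⊇ ·) Z := by
      rintro ⟨A, hA⟩ ⟨B, hB⟩
      rcases hA with rfl | hA
      · exact ⟨⟨B, hB⟩, fun p hp => ⟨Filter.univ_mem, hp.2⟩, fun p hp => hp⟩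
      rcases hB with rfl | hB
      · exact ⟨⟨A, Set.mem_insert_of_mem _ hA⟩, fun p hp => hp,
          fun p hp => ⟨Filter.univ_mem, hp.2⟩⟩
      refine ⟨⟨A ∩ B, Set.mem_insert_of_mem _ (hfil.2 hA hB)⟩, ?_, ?_⟩
      · exact fun p hp => ⟨p.mem_of_superset hp.1 Set.inter_subset_left, hp.2⟩
      · exact fun p hp => ⟨p.mem_of_superset hp.1 Set.inter_subset_right, hp.2⟩
    have := IsCompact.nonempty_iInter_of_directed_nonempty_isCompact_isClosed Z hdir hZne
      (fun A => (hZclosed A).isCompact) hZclosed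
    obtain ⟨p, hp⟩ := this
    simp only [Set.mem_iInter] at hp
    refine ⟨p, (hp ⟨Set.univ, Set.mem_insert _ _⟩).2, fun A hA =>
      (hp ⟨A, Set.mem_insert_of_mem _ hA⟩).1⟩
  -- C is closed, hence compact
  have hCclosed : IsClosed C := by
    have : C = (⋂ A ∈ F, {p : Ultrafilter ℕ | A ∈ p}) ∩ L := by
      ext p
      simp only [hCdef, Set.mem_inter_iff, Set.mem_iInter, Set.mem_setOf_eq, and_comm]
    rw [this]
    exact (isClosed_biInter fun A _ => ultrafilter_isClosed_basic A).inter hLclosed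
  -- C is a subsemigroup
  have hCadd : ∀ p ∈ C, ∀ q ∈ C, p + q ∈ C := by
    rintro p ⟨hpL, hpF⟩ q ⟨hqL, hqF⟩
    refine ⟨?_, ?_⟩
    · rw [← uAdd_eq]; exact hLideal.2 p q hqL
    · intro A hA
      rw [← uAdd_eq, mem_uAdd]
      have hB := hidem A hA
      refine p.mem_of_superset (hpF _ hB) ?_
      rintro n ⟨_, hn⟩
      exact q.mem_of_superset (hqF _ hn) (fun m hm => hm.2)
  obtain ⟨p, hpC, hpidem⟩ := exists_idempotent_in_compact_add_subsemigroup
    (Ultrafilter.continuous_add_left) C hCne hCclosed.isCompact hCadd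
  exact ⟨p, hpC.1, by rw [uAdd_eq]; exact hpidem, hpC.2⟩

end Aux

theorem syndetic_idempotent_filter_subset_idempotent_in_minimal_left_ideal
    (F : Set (Set ℕ)) (hfil : IsSetFilter F)
    (hsyn : ∀ A ∈ F, Syndetic A) (hidem : IdempotentFam F)
    (L : Set (Ultrafilter ℕ)) (hL : IsMinimalLeftIdeal L) :
    ∃ p ∈ L, uAdd p p = p ∧ ∀ A ∈ F, A ∈ p :=
  syndetic_idempotent_aux F hfil hsyn hidem L hL
end
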